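/- arXiv:2303.12608 — 4 statements merged into one kernel-verified Lean document; each statement's English description precedes it below -/
import Mathlib

section
/- (Laplace expansion) Let M be an n×n (q̂,p̂)-Manin matrix over R. Let I and K be increasing multi-indices contained in {1,…,n} of sizes r and n−r respectively. Then ε(p̂, I⊕K) · cdet_{q̂}(M) = ∑_J ε(q̂, J⊕J^c) · cdet_{q̂}(M_{JI}) · cdet_{q̂}(M_{J^c,K}), where the sum is over all increasing multi-indices J ⊆ {1,…,n} of size r and J^c is the increasing complement of J in {1,…,n}. -/
open scoped BigOperators Classical

noncomputable section

/-- `ε(q̂, I, σ)`: the `q̂`-inversion sign associated to the multi-index `I` and `σ ∈ S_r`,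
`ε(q̂,I,σ) = ∏_{s<t, σ(s)>σ(t)} (-q_{i_{σ(s)} i_{σ(t)}})`. -/
def manEps {n r : ℕ} (q : Matrix (Fin n) (Fin n) ℂ) (I : Fin r → Fin n)
    (σ : Equiv.Perm (Fin r)) : ℂ :=
  ∏ st ∈ Finset.univ.filter (fun st : Fin r × Fin r => st.1 < st.2 ∧ σ st.2 < σ st.1),
    (-q (I (σ st.1)) (I (σ st.2)))

/-- `ε(q̂, I)` for a multi-index `I`: `0` if two entries coincide, and
`∏_{s<t, i_s>i_t}(-q_{i_s i_t})` otherwise. -/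
def manEpsIdx {n r : ℕ} (q : Matrix (Fin n) (Fin n) ℂ) (I : Fin r → Fin n) : ℂ :=
  if Function.Injective I then
    ∏ st ∈ Finset.univ.filter (fun st : Fin r × Fin r => st.1 < st.2 ∧ I st.2 < I st.1),
      (-q (I st.1) (I st.2))
  else 0

/-- The column `q̂`-minor determinant
`cdet_{q̂}(M_{IJ}) = ∑_{σ∈S_r} ε(q̂,I,σ) M_{i_{σ(1)},j_1} ⋯ M_{i_{σ(r)},j_r}`. -/
def cdet {R : Type*} [Ring R] [Algebra ℂ R] {n m r : ℕ} (q : Matrix (Fin n) (Fin n) ℂ)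
    (M : Matrix (Fin n) (Fin m) R) (I : Fin r → Fin n) (J : Fin r → Fin m) : R :=
  ∑ σ : Equiv.Perm (Fin r),
    manEps q I σ • (List.ofFn fun a : Fin r => M (I (σ a)) (J a)).prod

/-- A parametric matrix: nonzero entries with `q_{ij} q_{ji} = 1` and `q_{ii} = 1`. -/
def IsParametric {n : ℕ} (q : Matrix (Fin n) (Fin n) ℂ) : Prop :=
  (∀ i j, q i j ≠ 0) ∧ (∀ i j, q i j * q j i = 1) ∧ ∀ i, q i i = 1

/-- An `n×m` `(q̂, p̂)`-Manin matrix over `R`. -/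
def IsManin {R : Type*} [Ring R] [Algebra ℂ R] {n m : ℕ} (q : Matrix (Fin n) (Fin n) ℂ)
    (p : Matrix (Fin m) (Fin m) ℂ) (M : Matrix (Fin n) (Fin m) R) : Prop :=
  (∀ (i j : Fin n) (k : Fin m), i < j → M i k * M j k = q j i • (M j k * M i k)) ∧
  ∀ (i j : Fin n) (k l : Fin m), i < j → k < l →
    M i k * M j l - (q j i * p k l) • (M j l * M i k) + p k l • (M i l * M j k)
      - q j i • (M j k * M i l) = 0

/-- The increasing enumeration of the complement of a subset `J ⊆ {1,…,n}` of card `r`. -/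
def complEnum {n r : ℕ} (J : Finset (Fin n)) (hJ : J.card = r) : Fin (n - r) → Fin n :=
  ⇑(Jᶜ.orderEmbOfFin (by simp [Finset.card_compl, hJ]))

/-! Let `Λ` be the `q̂`-exterior algebra on `η_1, …, η_n` (`η_i η_j = -q_{ij} η_j η_i`) and
`θ_k = ∑_i η_i ⊗ M_{ik} ∈ Λ ⊗ R`. The Manin relations say exactly that `θ_k² = 0` and
`θ_k θ_l = -p_{kl} θ_l θ_k`, so sorting `θ_{k_1} ⋯ θ_{k_n}` gives `ε(p̂, k) θ_1 ⋯ θ_n`, and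
`θ_1 ⋯ θ_n = cdet_q̂(M) η_{1…n}`. More generally `θ_{k_1} ⋯ θ_{k_r}` has coefficient
`cdet_q̂(M_{J,k})` at `η_J`, and `η_J η_{J^c} = ε(q̂, J⊕J^c) η_{1…n}`; computing
`θ_{i_1} ⋯ θ_{i_r} θ_{k_1} ⋯ θ_{k_{n-r}}` in both ways gives the expansion. -/

open Finset

theorem Finset.sum_sum_erase_eq_zero {α M : Type*} [LinearOrder α] [AddCommMonoid M]
    (S : Finset α) (F : α → α → M) (h : ∀ i ∈ S, ∀ j ∈ S, i < j → F i j + F j i = 0) :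
    ∑ i ∈ S, ∑ j ∈ S.erase i, F i j = 0 := by
  rw [sum_sigma']
  refine sum_involution (fun x _ => ⟨x.2, x.1⟩) (fun ⟨i, j⟩ hx => ?_)
    (fun ⟨i, j⟩ hx _ => ?_) (fun ⟨i, j⟩ hx => ?_) (fun _ _ => rfl)
  all_goals simp only [mem_sigma, mem_erase] at hx ⊢
  · obtain ⟨hi, hji, hj⟩ := hx
    rcases hji.lt_or_gt with hji | hij
    · rw [add_comm]; exact h j hj i hi hji
    · exact h i hi j hj hij
  · simp [hx.2.1]
  · exact ⟨hx.2.2, hx.2.1.symm, hx.1⟩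

theorem Finset.sum_sum_powersetCard_erase {α M : Type*} [DecidableEq α] [AddCommMonoid M]
    (S : Finset α) (r : ℕ) (f : α → Finset α → M) :
    ∑ i ∈ S, ∑ J ∈ (S.erase i).powersetCard r, f i J
      = ∑ J ∈ S.powersetCard (r + 1), ∑ i ∈ J, f i (J.erase i) := by
  rw [sum_sigma', sum_sigma']
  refine sum_nbij' (fun x => ⟨insert x.1 x.2, x.1⟩) (fun y => ⟨y.2, y.1.erase y.2⟩)
    ?_ ?_ ?_ ?_ ?_
  · rintro ⟨i, J⟩ hiJ
    simp only [mem_sigma, mem_powersetCard, subset_erase] at hiJ ⊢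
    refine ⟨⟨insert_subset hiJ.1 hiJ.2.1.1, ?_⟩, mem_insert_self _ _⟩
    rw [card_insert_of_notMem hiJ.2.1.2, hiJ.2.2]
  · rintro ⟨J, i⟩ hJi
    simp only [mem_sigma, mem_powersetCard] at hJi ⊢
    refine ⟨hJi.1.1 hJi.2, erase_subset_erase _ hJi.1.1, ?_⟩
    rw [card_erase_of_mem hJi.2, hJi.1.2, Nat.add_sub_cancel]
  · rintro ⟨i, J⟩ hiJ
    simp only [mem_sigma, mem_powersetCard, subset_erase] at hiJ
    simp [erase_insert hiJ.2.1.2]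
  · rintro ⟨J, i⟩ hJi
    simp [insert_erase (mem_sigma.mp hJi).2]
  · rintro ⟨i, J⟩ hiJ
    simp only [mem_sigma, mem_powersetCard, subset_erase] at hiJ
    simp [erase_insert hiJ.2.1.2]

@[to_additive]
theorem Finset.prod_orderEmbOfFin {α M : Type*} [LinearOrder α] [CommMonoid M] (s : Finset α)
    {k : ℕ} (h : s.card = k) (g : α → M) :
    ∏ i, g (s.orderEmbOfFin h i) = ∏ x ∈ s, g x := by
  conv_rhs => rw [← s.map_orderEmbOfFin_univ h, prod_map]
  rfl

theorem Finset.erase_sdiff_erase_of_mem {α : Type*} [DecidableEq α] {S J : Finset α} {i : α}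
    (hi : i ∈ J) : S.erase i \ J.erase i = S \ J := by
  ext x
  simp only [mem_sdiff, mem_erase]
  by_cases hx : x = i <;> simp_all

theorem Finset.orderEmbOfFin_erase {α : Type*} [LinearOrder α] {J : Finset α} {r : ℕ}
    (h : J.card = r + 1) (a : Fin (r + 1)) (h' : (J.erase (J.orderEmbOfFin h a)).card = r) :
    ⇑((J.erase (J.orderEmbOfFin h a)).orderEmbOfFin h') = J.orderEmbOfFin h ∘ a.succAbove :=
  (orderEmbOfFin_unique h'
    (fun b => mem_erase.mpr ⟨(J.orderEmbOfFin h).injective.ne (a.succAbove_ne b),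
      orderEmbOfFin_mem J h _⟩)
    ((J.orderEmbOfFin h).strictMono.comp (Fin.strictMono_succAbove a))).symm

def Equiv.Perm.cons {r : ℕ} (a : Fin (r + 1)) (τ : Equiv.Perm (Fin r)) :
    Equiv.Perm (Fin (r + 1)) :=
  (finSuccEquiv r).trans (τ.optionCongr.trans (finSuccEquiv' a).symm)

namespace Equiv.Perm

variable {r : ℕ} (a : Fin (r + 1)) (τ : Equiv.Perm (Fin r))

@[simp] theorem cons_apply_zero : cons a τ 0 = a := by simp [cons]

@[simp] theorem cons_apply_succ (i : Fin r) : cons a τ i.succ = a.succAbove (τ i) := by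
  simp [cons]

theorem coe_cons : ⇑(cons a τ) = Fin.cons a (a.succAbove ∘ τ) := by
  ext i
  cases i using Fin.cases <;> simp

theorem bijective_cons :
    Function.Bijective (fun x : Fin (r + 1) × Equiv.Perm (Fin r) => cons x.1 x.2) := by
  rw [Fintype.bijective_iff_injective_and_card]
  refine ⟨fun ⟨a, τ⟩ ⟨b, υ⟩ h => ?_, by simp [Fintype.card_perm, Nat.factorial_succ]⟩
  have hab : a = b := by simpa using DFunLike.congr_fun h 0
  subst hab
  have hτυ : τ = υ := Equiv.ext fun i =>
    a.succAbove_right_injective (by simpa using DFunLike.congr_fun h i.succ)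
  rw [hτυ]

end Equiv.Perm

section Signs

variable {n : ℕ} (q : Matrix (Fin n) (Fin n) ℂ)

def invProd {r : ℕ} (f : Fin r → Fin n) : ℂ :=
  ∏ s, ∏ t, if s < t ∧ f t < f s then -q (f s) (f t) else 1

/-- `η_i η_{S \ i} = qSign q i S • η_S` for `i ∈ S`. -/
def qSign (i : Fin n) (S : Finset (Fin n)) : ℂ :=
  ∏ j ∈ S, if j < i then -q i j else 1

def crossSign (A B : Finset (Fin n)) : ℂ :=
  ∏ a ∈ A, qSign q a B

variable {q}

theorem manEps_eq_invProd {r : ℕ} {I : Fin r → Fin n} (hI : StrictMono I)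
    (σ : Equiv.Perm (Fin r)) : manEps q I σ = invProd q (I ∘ σ) := by
  rw [manEps, prod_filter, ← univ_product_univ, prod_product]
  simp [invProd, hI.lt_iff_lt]

theorem manEpsIdx_of_injective {r : ℕ} {f : Fin r → Fin n} (hf : f.Injective) :
    manEpsIdx q f = invProd q f := by
  rw [manEpsIdx, if_pos hf, prod_filter, ← univ_product_univ, prod_product]
  rfl

theorem invProd_cons {r : ℕ} (a : Fin n) (f : Fin r → Fin n) :
    invProd q (Fin.cons a f : Fin (r + 1) → Fin n)
      = (∏ t, if f t < a then -q a (f t) else 1) * invProd q f := by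
  simp [invProd, Fin.prod_univ_succ, Fin.succ_pos]

theorem invProd_append {a b : ℕ} (f : Fin a → Fin n) (g : Fin b → Fin n) :
    invProd q (Fin.append f g)
      = invProd q f * invProd q g * ∏ s, ∏ t, if g t < f s then -q (f s) (g t) else 1 := by
  have hlt (s : Fin a) (t : Fin b) : Fin.castAdd b s < Fin.natAdd a t := by
    simp only [Fin.lt_def, Fin.val_castAdd, Fin.val_natAdd]; omega
  have hnlt (s : Fin a) (t : Fin b) : ¬ Fin.natAdd a t < Fin.castAdd b s := by
    simp only [Fin.lt_def, Fin.val_castAdd, Fin.val_natAdd]; omega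
  simp only [invProd, Fin.prod_univ_add, Fin.append_left, Fin.append_right,
    (Fin.strictMono_castAdd b).lt_iff_lt, Fin.natAdd_lt_natAdd_iff, hlt, hnlt, true_and, false_and,
    if_false, prod_const_one, mul_one, prod_mul_distrib]
  ring

theorem invProd_of_strictMono {r : ℕ} {f : Fin r → Fin n} (hf : StrictMono f) :
    invProd q f = 1 :=
  prod_eq_one fun _ _ => prod_eq_one fun _ _ =>
    if_neg fun h => (hf h.1).not_gt h.2

theorem qSign_empty (i : Fin n) : qSign q i ∅ = 1 := prod_empty

theorem qSign_union {A B : Finset (Fin n)} (h : Disjoint A B) (i : Fin n) :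
    qSign q i (A ∪ B) = qSign q i A * qSign q i B :=
  prod_union h

theorem qSign_erase_of_not_lt {S : Finset (Fin n)} {i j : Fin n} (h : ¬ i < j) :
    qSign q j (S.erase i) = qSign q j S := by
  by_cases hi : i ∈ S
  · rw [qSign, qSign, ← mul_prod_erase S _ hi, if_neg h, one_mul]
  · rw [erase_eq_of_notMem hi]

theorem qSign_eq_mul_erase_of_lt {S : Finset (Fin n)} {i j : Fin n} (hi : i ∈ S) (h : i < j) :
    qSign q j S = -q j i * qSign q j (S.erase i) := by
  rw [qSign, qSign, ← mul_prod_erase S _ hi, if_pos h]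

theorem qSign_mul_qSign_erase_swap {S : Finset (Fin n)} {i j : Fin n} (hi : i ∈ S)
    (hij : i < j) :
    qSign q j S * qSign q i (S.erase j) = -q j i * (qSign q i S * qSign q j (S.erase i)) := by
  rw [qSign_eq_mul_erase_of_lt hi hij, qSign_erase_of_not_lt hij.not_gt]
  ring

theorem crossSign_eq_mul_erase {A B : Finset (Fin n)} {i : Fin n} (hi : i ∈ A) :
    crossSign q A B = qSign q i B * crossSign q (A.erase i) B :=
  (mul_prod_erase A _ hi).symm

theorem crossSign_empty (A : Finset (Fin n)) : crossSign q A ∅ = 1 :=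
  prod_eq_one fun _ _ => qSign_empty _

theorem qSign_orderEmbOfFin {J : Finset (Fin n)} {r : ℕ} (h : J.card = r + 1) (a : Fin (r + 1)) :
    qSign q (J.orderEmbOfFin h a) J
      = ∏ b : Fin r, if J.orderEmbOfFin h (a.succAbove b) < J.orderEmbOfFin h a then
          -q (J.orderEmbOfFin h a) (J.orderEmbOfFin h (a.succAbove b)) else 1 := by
  rw [qSign, ← prod_orderEmbOfFin J h, Fin.prod_univ_succAbove _ a, if_neg (lt_irrefl _),
    one_mul]

theorem manEpsIdx_append_orderEmbOfFin {A B : Finset (Fin n)} {a b : ℕ} (hA : A.card = a)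
    (hB : B.card = b) (hAB : Disjoint A B) :
    manEpsIdx q (Fin.append (A.orderEmbOfFin hA) (B.orderEmbOfFin hB)) = crossSign q A B := by
  have hinj : (Fin.append (A.orderEmbOfFin hA) (B.orderEmbOfFin hB)).Injective :=
    Fin.append_injective_iff.mpr ⟨(A.orderEmbOfFin hA).injective,
      (B.orderEmbOfFin hB).injective, fun s t hst => disjoint_left.mp hAB
        (orderEmbOfFin_mem A hA s) (hst ▸ orderEmbOfFin_mem B hB t)⟩
  rw [manEpsIdx_of_injective hinj, invProd_append,
    invProd_of_strictMono (A.orderEmbOfFin hA).strictMono,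
    invProd_of_strictMono (B.orderEmbOfFin hB).strictMono, one_mul, one_mul, crossSign,
    ← prod_orderEmbOfFin A hA]
  simp only [qSign, ← prod_orderEmbOfFin B hB]

end Signs

section ListSigns

variable {n : ℕ} (q : Matrix (Fin n) (Fin n) ℂ)

def insertSign (k : Fin n) (L : List (Fin n)) : ℂ :=
  if k ∈ L then 0 else (L.map fun j => if j < k then -q k j else 1).prod

def listSign : List (Fin n) → ℂ
  | [] => 1
  | k :: L => insertSign q k L * listSign L

variable {q}

theorem insertSign_perm {L L' : List (Fin n)} (h : L.Perm L') (k : Fin n) :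
    insertSign q k L = insertSign q k L' := by
  simp only [insertSign, h.mem_iff, (h.map _).prod_eq]

theorem insertSign_of_forall_lt {k : Fin n} {L : List (Fin n)} (h : ∀ j ∈ L, k < j) :
    insertSign q k L = 1 := by
  rw [insertSign, if_neg fun hk => lt_irrefl k (h k hk)]
  exact List.prod_eq_one fun x hx => by
    obtain ⟨j, hj, rfl⟩ := List.mem_map.mp hx
    exact if_neg (h j hj).not_gt

theorem insertSign_cons_of_lt {k a : Fin n} (h : a < k) (L : List (Fin n)) :
    insertSign q k (a :: L) = -q k a * insertSign q k L := by
  simp [insertSign, h, h.ne']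

theorem manEpsIdx_cons {r : ℕ} (a : Fin n) (f : Fin r → Fin n) :
    manEpsIdx q (Fin.cons a f : Fin (r + 1) → Fin n)
      = insertSign q a (List.ofFn f) * manEpsIdx q f := by
  by_cases hf : f.Injective
  · by_cases ha : a ∈ Set.range f
    · rw [manEpsIdx, if_neg fun h => (Fin.cons_injective_iff.mp h).1 ha, insertSign,
        if_pos (List.mem_ofFn.mpr ha), zero_mul]
    · rw [manEpsIdx_of_injective (Fin.cons_injective_iff.mpr ⟨ha, hf⟩),
        manEpsIdx_of_injective hf, invProd_cons, insertSign,
        if_neg (fun h => ha (List.mem_ofFn.mp h)), List.map_ofFn, List.prod_ofFn]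
      rfl
  · rw [manEpsIdx, manEpsIdx, if_neg fun h => hf (Fin.cons_injective_iff.mp h).2, if_neg hf,
      mul_zero]

theorem listSign_ofFn {r : ℕ} (f : Fin r → Fin n) : listSign q (List.ofFn f) = manEpsIdx q f := by
  induction r with
  | zero => simp [listSign, manEpsIdx, Function.injective_of_subsingleton]
  | succ r ih =>
    rw [List.ofFn_succ, listSign, ← Fin.cons_self_tail f, manEpsIdx_cons]
    exact congrArg _ (ih _)

end ListSigns

section Minors

variable {R : Type*} [Ring R] [Algebra ℂ R] {n m : ℕ} (q : Matrix (Fin n) (Fin n) ℂ)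
  (M : Matrix (Fin n) (Fin m) R)

def minorCdet {r : ℕ} (J : Finset (Fin n)) (ks : Fin r → Fin m) : R :=
  if h : J.card = r then cdet q M (J.orderEmbOfFin h) ks else 0

theorem cdet_zero (I : Fin 0 → Fin n) (ks : Fin 0 → Fin m) : cdet q M I ks = 1 := by
  simp [cdet, manEps]

theorem cdet_succ {r : ℕ} {I : Fin (r + 1) → Fin n} (hI : StrictMono I)
    (ks : Fin (r + 1) → Fin m) :
    cdet q M I ks = ∑ a, (∏ b : Fin r, if I (a.succAbove b) < I a then
        -q (I a) (I (a.succAbove b)) else 1) •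
      (M (I a) (ks 0) * cdet q M (I ∘ a.succAbove) (Fin.tail ks)) := by
  rw [cdet, ← Fintype.sum_bijective _ Equiv.Perm.bijective_cons _ _ fun _ => rfl,
    Fintype.sum_prod_type]
  refine sum_congr rfl fun a _ => ?_
  rw [cdet, mul_sum, smul_sum]
  refine sum_congr rfl fun τ _ => ?_
  rw [manEps_eq_invProd hI, manEps_eq_invProd (hI.comp (Fin.strictMono_succAbove a)),
    Equiv.Perm.coe_cons, Fin.comp_cons, invProd_cons, List.ofFn_succ, List.prod_cons,
    ← Equiv.prod_comp τ (fun b => if I (a.succAbove b) < I a then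
        -q (I a) (I (a.succAbove b)) else 1), mul_smul_comm, smul_smul]
  rfl

theorem minorCdet_succ {r : ℕ} {J : Finset (Fin n)} (h : J.card = r + 1)
    (ks : Fin (r + 1) → Fin m) :
    minorCdet q M J ks
      = ∑ i ∈ J, qSign q i J • (M i (ks 0) * minorCdet q M (J.erase i) (Fin.tail ks)) := by
  rw [minorCdet, dif_pos h, cdet_succ q M (J.orderEmbOfFin h).strictMono,
    ← sum_orderEmbOfFin J h]
  refine sum_congr rfl fun a _ => ?_
  have h' : (J.erase (J.orderEmbOfFin h a)).card = r := by
    rw [card_erase_of_mem (orderEmbOfFin_mem J h a), h, Nat.add_sub_cancel]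
  rw [qSign_orderEmbOfFin, minorCdet, dif_pos h', orderEmbOfFin_erase]

end Minors

section ExteriorModel

variable {R : Type*} [Ring R] [Algebra ℂ R] {n m : ℕ} (q : Matrix (Fin n) (Fin n) ℂ)
  (M : Matrix (Fin n) (Fin m) R)

/-- An element of `Λ ⊗ R` is stored as `S ↦` (coefficient of `η_S`); `colOp q M k` is left
multiplication by `θ_k`. -/
def colOp (k : Fin m) (v : Finset (Fin n) → R) : Finset (Fin n) → R :=
  fun S => ∑ i ∈ S, qSign q i S • (M i k * v (S.erase i))

def colOps (L : List (Fin m)) (v : Finset (Fin n) → R) : Finset (Fin n) → R :=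
  L.foldr (colOp q M) v

@[simp] theorem colOps_nil (v : Finset (Fin n) → R) : colOps q M [] v = v := rfl

@[simp] theorem colOps_cons (k : Fin m) (L : List (Fin m)) (v : Finset (Fin n) → R) :
    colOps q M (k :: L) v = colOp q M k (colOps q M L v) := rfl

theorem colOps_append (L L' : List (Fin m)) (v : Finset (Fin n) → R) :
    colOps q M (L ++ L') v = colOps q M L (colOps q M L' v) :=
  List.foldr_append

theorem colOp_smul (k : Fin m) (c : ℂ) (v : Finset (Fin n) → R) :
    colOp q M k (c • v) = c • colOp q M k v := by
  ext S
  simp only [colOp, Pi.smul_apply, smul_sum, mul_smul_comm, smul_comm c]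

theorem colOp_colOp_apply (k l : Fin m) (v : Finset (Fin n) → R) (S : Finset (Fin n)) :
    colOp q M k (colOp q M l v) S = ∑ i ∈ S, ∑ j ∈ S.erase i,
      (qSign q i S * qSign q j (S.erase i)) • (M i k * (M j l * v ((S.erase i).erase j))) := by
  simp only [colOp, mul_sum, smul_sum, mul_smul_comm, smul_smul]

variable {q} in
theorem sum_qSign_smul_eq_zero {S : Finset (Fin n)} {F : Fin n → Fin n → R}
    (hF : ∀ i ∈ S, ∀ j ∈ S, i < j → F i j = q j i • F j i) :
    ∑ i ∈ S, ∑ j ∈ S.erase i, (qSign q i S * qSign q j (S.erase i)) • F i j = 0 := by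
  refine sum_sum_erase_eq_zero S _ fun i hi j hj hij => ?_
  rw [qSign_mul_qSign_erase_swap hi hij, hF i hi j hj hij, smul_smul, ← add_smul]
  convert zero_smul ℂ (F j i) using 2
  ring

variable {q M}

theorem colOp_colOp_self {p : Matrix (Fin m) (Fin m) ℂ} (hM : IsManin q p M) (k : Fin m)
    (v : Finset (Fin n) → R) : colOp q M k (colOp q M k v) = 0 := by
  ext S
  rw [colOp_colOp_apply, Pi.zero_apply]
  refine sum_qSign_smul_eq_zero fun i _ j _ hij => ?_
  rw [erase_right_comm, ← mul_assoc, hM.1 i j k hij, ← mul_assoc, smul_mul_assoc]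

theorem IsManin.cross_relation {p : Matrix (Fin m) (Fin m) ℂ} (hM : IsManin q p M) {i j : Fin n}
    {k l : Fin m} (hij : i < j) (hkl : k < l) :
    M i k * M j l + p k l • (M i l * M j k)
      = q j i • (M j k * M i l + p k l • (M j l * M i k)) := by
  rw [← sub_eq_zero, ← hM.2 i j k l hij hkl]
  module

theorem colOp_colOp_of_lt {p : Matrix (Fin m) (Fin m) ℂ} (hM : IsManin q p M) {k l : Fin m}
    (hkl : k < l) (v : Finset (Fin n) → R) :
    colOp q M k (colOp q M l v) = -p k l • colOp q M l (colOp q M k v) := by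
  rw [neg_smul, eq_neg_iff_add_eq_zero]
  ext S
  rw [Pi.add_apply, Pi.smul_apply, colOp_colOp_apply, colOp_colOp_apply, Pi.zero_apply,
    smul_sum, ← sum_add_distrib]
  calc _ = ∑ i ∈ S, ∑ j ∈ S.erase i, (qSign q i S * qSign q j (S.erase i)) •
        ((M i k * M j l + p k l • (M i l * M j k)) * v ((S.erase i).erase j)) := by
        refine sum_congr rfl fun i _ => ?_
        rw [smul_sum, ← sum_add_distrib]
        refine sum_congr rfl fun j _ => ?_
        rw [add_mul, smul_mul_assoc, mul_assoc, mul_assoc, smul_add, smul_comm]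
    _ = 0 := sum_qSign_smul_eq_zero fun i _ j _ hij => by
        rw [erase_right_comm, hM.cross_relation hij hkl, smul_mul_assoc]

theorem colOp_colOp_of_ne {p : Matrix (Fin m) (Fin m) ℂ} (hp : IsParametric p)
    (hM : IsManin q p M) {k l : Fin m} (hkl : k ≠ l) (v : Finset (Fin n) → R) :
    colOp q M k (colOp q M l v) = -p k l • colOp q M l (colOp q M k v) := by
  rcases hkl.lt_or_gt with hkl | hlk
  · exact colOp_colOp_of_lt hM hkl v
  · rw [colOp_colOp_of_lt hM hlk, smul_smul, neg_mul_neg, hp.2.1, one_smul]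

end ExteriorModel

section Expansion

variable {R : Type*} [Ring R] [Algebra ℂ R] {n m : ℕ} {q : Matrix (Fin n) (Fin n) ℂ}
  {p : Matrix (Fin m) (Fin m) ℂ} {M : Matrix (Fin n) (Fin m) R}

theorem colOp_colOps_of_sorted (hp : IsParametric p) (hM : IsManin q p M) (k : Fin m)
    {s : List (Fin m)} (hs : s.Pairwise (· ≤ ·)) (v : Finset (Fin n) → R) :
    colOp q M k (colOps q M s v)
      = insertSign p k s • colOps q M (s.orderedInsert (· ≤ ·) k) v := by
  induction s with
  | nil => simp [insertSign]
  | cons a s ih =>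
    obtain ⟨has, hs⟩ := List.pairwise_cons.mp hs
    rcases lt_trichotomy k a with hka | rfl | hak
    · rw [insertSign_of_forall_lt (List.forall_mem_cons.mpr
          ⟨hka, fun j hj => hka.trans_le (has j hj)⟩), one_smul, List.orderedInsert_cons,
        if_pos hka.le]
      rfl
    · rw [colOps_cons, colOp_colOp_self hM, insertSign, if_pos List.mem_cons_self, zero_smul]
    · rw [colOps_cons, colOp_colOp_of_ne hp hM hak.ne', ih hs, colOp_smul, smul_smul,
        insertSign_cons_of_lt hak, List.orderedInsert_cons, if_neg hak.not_ge, colOps_cons]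

theorem colOps_eq_listSign_smul (hp : IsParametric p) (hM : IsManin q p M) (L : List (Fin m))
    (v : Finset (Fin n) → R) :
    colOps q M L v = listSign p L • colOps q M (L.insertionSort (· ≤ ·)) v := by
  induction L with
  | nil => simp [listSign]
  | cons k L ih =>
    rw [colOps_cons, ih, colOp_smul, colOp_colOps_of_sorted hp hM k (L.pairwise_insertionSort _),
      insertSign_perm (L.perm_insertionSort _), smul_smul, listSign, mul_comm,
      List.insertionSort_cons]

variable (q M)

theorem colOps_ofFn_apply {r : ℕ} (ks : Fin r → Fin m) (v : Finset (Fin n) → R)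
    (S : Finset (Fin n)) :
    colOps q M (List.ofFn ks) v S
      = ∑ J ∈ S.powersetCard r, crossSign q J (S \ J) • (minorCdet q M J ks * v (S \ J)) := by
  induction r generalizing S with
  | zero => simp [crossSign, qSign, minorCdet, cdet_zero]
  | succ r ih =>
    rw [List.ofFn_succ, colOps_cons]
    simp only [colOp, ih, mul_sum, smul_sum, mul_smul_comm, smul_smul]
    rw [sum_sum_powersetCard_erase]
    refine sum_congr rfl fun J hJ => ?_
    obtain ⟨hJS, hJr⟩ := mem_powersetCard.mp hJ
    rw [minorCdet_succ q M hJr, sum_mul, smul_sum]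
    refine sum_congr rfl fun i hi => ?_
    have hsign : qSign q i S * crossSign q (J.erase i) (S \ J)
        = crossSign q J (S \ J) * qSign q i J := by
      rw [← union_sdiff_of_subset hJS, qSign_union disjoint_sdiff, union_sdiff_of_subset hJS,
        crossSign_eq_mul_erase hi]
      ring
    rw [erase_sdiff_erase_of_mem hi, hsign, mul_smul, smul_mul_assoc, mul_assoc]
    rfl

theorem colOps_ofFn_single {r : ℕ} (ks : Fin r → Fin m) (S : Finset (Fin n)) :
    colOps q M (List.ofFn ks) (Pi.single ∅ 1) S = minorCdet q M S ks := by
  rw [colOps_ofFn_apply, sum_eq_single S]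
  · simp [crossSign_empty]
  · intro J hJ hJS
    have : S \ J ≠ ∅ := fun h => hJS (subset_antisymm (mem_powersetCard.mp hJ).1
      (sdiff_eq_empty_iff_subset.mp h))
    simp [this]
  · intro hS
    have hSr : S.card ≠ r := fun h => hS (mem_powersetCard.mpr ⟨subset_refl S, h⟩)
    simp [minorCdet, hSr]

end Expansion

section Laplace

variable {R : Type*} [Ring R] [Algebra ℂ R] {n m : ℕ}

theorem insertionSort_ofFn_eq_finRange {k : ℕ} {f : Fin k → Fin n} (hf : f.Injective)
    (hk : k = n) : (List.ofFn f).insertionSort (· ≤ ·) = List.finRange n := by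
  subst hk
  refine List.Perm.eq_of_pairwise' (List.pairwise_insertionSort _ _)
    (List.pairwise_le_finRange k) ((List.perm_insertionSort _ _).trans ?_)
  rw [List.perm_ext_iff_of_nodup (List.nodup_ofFn.mpr hf) (List.nodup_finRange k)]
  simp [Finite.surjective_of_injective hf _]

theorem orderEmbOfFin_univ (h : (univ : Finset (Fin n)).card = n) :
    ⇑((univ : Finset (Fin n)).orderEmbOfFin h) = id :=
  (orderEmbOfFin_unique h (fun _ => mem_univ _) strictMono_id).symm

theorem colOps_ofFn_single_univ {q p : Matrix (Fin n) (Fin n) ℂ} {M : Matrix (Fin n) (Fin n) R}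
    (hp : IsParametric p) (hM : IsManin q p M) {k : ℕ} (f : Fin k → Fin n) (hk : k = n) :
    colOps q M (List.ofFn f) (Pi.single ∅ 1) univ = manEpsIdx p f • cdet q M id id := by
  rw [colOps_eq_listSign_smul hp hM, listSign_ofFn, Pi.smul_apply]
  by_cases hf : f.Injective
  · rw [insertionSort_ofFn_eq_finRange hf hk, ← List.ofFn_id, colOps_ofFn_single, minorCdet,
      dif_pos (card_fin n), orderEmbOfFin_univ]
  · simp [manEpsIdx, hf]

theorem colOps_append_ofFn_single_univ (q : Matrix (Fin n) (Fin n) ℂ)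
    (M : Matrix (Fin n) (Fin m) R) {r : ℕ} (ks : Fin r → Fin m) (ls : Fin (n - r) → Fin m) :
    colOps q M (List.ofFn ks ++ List.ofFn ls) (Pi.single ∅ 1) univ
      = ∑ J : {J : Finset (Fin n) // J.card = r},
          manEpsIdx q (Fin.append (J.1.orderEmbOfFin J.2) (complEnum J.1 J.2)) •
            (cdet q M (J.1.orderEmbOfFin J.2) ks * cdet q M (complEnum J.1 J.2) ls) := by
  rw [colOps_append, colOps_ofFn_apply,
    sum_subtype (powersetCard r univ) fun J => mem_powersetCard_univ]
  refine Fintype.sum_congr _ _ fun J => ?_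
  have hc : J.1ᶜ.card = n - r := by rw [card_compl, J.2, Fintype.card_fin]
  rw [colOps_ofFn_single, ← compl_eq_univ_sdiff, complEnum,
    manEpsIdx_append_orderEmbOfFin J.2 hc disjoint_compl_right, minorCdet, minorCdet,
    dif_pos J.2, dif_pos hc]

end Laplace

theorem laplace_expansion_general {R : Type*} [Ring R] [Algebra ℂ R] {n r : ℕ}
    (q p : Matrix (Fin n) (Fin n) ℂ) (hp : IsParametric p)
    (M : Matrix (Fin n) (Fin n) R) (hM : IsManin q p M)
    (I K : Finset (Fin n)) (hI : I.card = r) (hK : K.card = n - r) :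
    manEpsIdx p (Fin.append ⇑(I.orderEmbOfFin hI) ⇑(K.orderEmbOfFin hK)) • cdet q M id id
      = ∑ J : {J : Finset (Fin n) // J.card = r},
          manEpsIdx q (Fin.append ⇑(J.1.orderEmbOfFin J.2) (complEnum J.1 J.2)) •
            (cdet q M ⇑(J.1.orderEmbOfFin J.2) ⇑(I.orderEmbOfFin hI) *
              cdet q M (complEnum J.1 J.2) ⇑(K.orderEmbOfFin hK)) := by
  have hr : r ≤ n := hI ▸ (card_le_univ I).trans_eq (Fintype.card_fin n)
  rw [← colOps_ofFn_single_univ hp hM _ (Nat.add_sub_cancel' hr), List.ofFn_fin_append,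
    colOps_append_ofFn_single_univ]

/-- Laplace expansion for `(q̂,p̂)`-Manin matrices:
`ε(p̂, I⊕K) cdet_{q̂}(M) = ∑_J ε(q̂, J⊕J^c) cdet_{q̂}(M_{JI}) cdet_{q̂}(M_{J^c,K})`,
summed over all increasing multi-indices `J ⊆ {1,…,n}` of size `r`. -/
theorem laplace_expansion {R : Type*} [Ring R] [Algebra ℂ R] {n r : ℕ}
    (q p : Matrix (Fin n) (Fin n) ℂ) (hq : IsParametric q) (hp : IsParametric p)
    (M : Matrix (Fin n) (Fin n) R) (hM : IsManin q p M)
    (I K : Finset (Fin n)) (hI : I.card = r) (hK : K.card = n - r) :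
    manEpsIdx p (Fin.append ⇑(I.orderEmbOfFin hI) ⇑(K.orderEmbOfFin hK)) • cdet q M id id
      = ∑ J : {J : Finset (Fin n) // J.card = r},
          manEpsIdx q (Fin.append ⇑(J.1.orderEmbOfFin J.2) (complEnum J.1 J.2)) •
            (cdet q M ⇑(J.1.orderEmbOfFin J.2) ⇑(I.orderEmbOfFin hI) *
              cdet q M (complEnum J.1 J.2) ⇑(K.orderEmbOfFin hK)) :=
  laplace_expansion_general q p hp M hM I K hI hK
end
end

section
/- (Inverse of a Manin matrix) Let M be an n×n (q̂,p̂)-Manin matrix over R such that cdet_{q̂}(M) is invertible in R. Define the n×n matrix N over R by N_{ij} = ε(p̂, i^c⊕(i))^{−1} · ε(q̂, j^c⊕(j)) · cdet_{q̂}(M)^{−1} · cdet_{q̂}(M_{j^c, i^c}). Then N·M is the identity n×n matrix over R; in particular, if M is invertible then M^{−1} = N. -/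
open scoped BigOperators Classical

noncomputable section

/-- The increasing enumeration `i^c : Fin (n-1) → Fin n` of `{1,…,n} \ {i}`. -/
def complOne {n : ℕ} (i : Fin n) : Fin (n - 1) → Fin n :=
  ⇑(({i}ᶜ : Finset (Fin n)).orderEmbOfFin (by simp [Finset.card_compl]))

/-! Expanding a column determinant along its last column gives, for all `i, j`,
`∑ₖ ε(q̂, k^c⊕(k)) cdet(M_{k^c, i^c}) M_{kj} = cdet(M_{(1…n), i^c⊕(j)})`, so `(N M)_{ij}` is
`ε(p̂, i^c⊕(i))⁻¹ cdet(M)⁻¹ cdet(M_{(1…n), i^c⊕(j)})`. The Manin relations say exactly that an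
adjacent transposition of columns `k, l` multiplies a column determinant by `-p̂_{lk}`: the terms
of `σ` and `σ ∘ (s s+1)` cancel four at a time. Rotating column `i` to the end therefore multiplies
`cdet M` by `ε(p̂, i^c⊕(i))`, which gives the diagonal; for `i ≠ j` the column `j` occurs twice,
and rotating one copy next to the other shows that the determinant equals its own negative,
hence vanishes. -/

lemma List.exists_prod_ofFn_eq_mul_mul {M : Type*} [Monoid M] {r : ℕ} (f : Fin r → M)
    (s t : Fin r) (hst : (s : ℕ) + 1 = t) :
    ∃ A B : M, ∀ g : Fin r → M, (∀ a, a ≠ s → a ≠ t → g a = f a) →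
      (List.ofFn g).prod = A * (g s * g t) * B := by
  refine ⟨((List.ofFn f).take s).prod, ((List.ofFn f).drop (s + 2)).prod, fun g hg => ?_⟩
  have hfar : ∀ a : Fin r, ((a : ℕ) < s ∨ (s : ℕ) + 2 ≤ a) → g a = f a := fun a ha =>
    hg a (by rintro rfl; omega) (by rintro rfl; omega)
  have htake : (List.ofFn g).take s = (List.ofFn f).take s :=
    List.ext_getElem (by simp) fun k hk _ => by
      simp only [List.getElem_take, List.getElem_ofFn]
      exact hfar _ (Or.inl (by simp at hk; omega))
  have hdrop : (List.ofFn g).drop (s + 2) = (List.ofFn f).drop (s + 2) :=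
    List.ext_getElem (by simp) fun k _ _ => by
      simp only [List.getElem_drop, List.getElem_ofFn]
      exact hfar _ (Or.inr (by simp))
  have hmid : (List.ofFn g).drop s = g s :: g t :: (List.ofFn g).drop (s + 2) := by
    rw [show g t = g ⟨s + 1, by omega⟩ from congrArg g (Fin.ext hst.symm)]
    rw [List.drop_eq_getElem_cons (by simp), List.drop_eq_getElem_cons (by simp; omega)]
    simp only [List.getElem_ofFn, Fin.eta]
  rw [← List.take_append_drop s (List.ofFn g), List.prod_append, hmid, htake, hdrop,
    List.prod_cons, List.prod_cons, mul_assoc, mul_assoc]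

def inversionPairs {r : ℕ} (σ : Equiv.Perm (Fin r)) : Finset (Fin r × Fin r) :=
  Finset.univ.filter fun st => st.1 < st.2 ∧ σ st.2 < σ st.1

lemma inversionPairs_mul_swap {r : ℕ} (σ : Equiv.Perm (Fin r)) {s t : Fin r}
    (hst : (s : ℕ) + 1 = t) (hσ : σ s < σ t) :
    inversionPairs (σ * Equiv.swap s t) = insert (s, t)
      ((inversionPairs σ).map ((Equiv.swap s t).prodCongr (Equiv.swap s t)).toEmbedding) := by
  have hswap : ∀ a b : Fin r, a < b → (a, b) ≠ (s, t) →
      Equiv.swap s t a < Equiv.swap s t b := by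
    intro a b hab hne
    simp only [Equiv.swap_apply_def, Fin.lt_def, Fin.ext_iff, ne_eq, Prod.mk.injEq] at *
    split_ifs <;> omega
  ext ⟨a, b⟩
  simp only [inversionPairs, Finset.mem_insert, Finset.mem_map_equiv, Finset.mem_filter,
    Finset.mem_univ, true_and]
  simp only [Equiv.prodCongr_symm, Equiv.prodCongr_apply, Equiv.symm_swap, Prod.map,
    Equiv.Perm.mul_apply]
  constructor
  · rintro ⟨hab, hinv⟩
    by_cases hne : (a, b) = (s, t)
    · exact Or.inl hne
    · exact Or.inr ⟨hswap a b hab hne, hinv⟩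
  · rintro (hst' | ⟨hab, hinv⟩)
    · simp only [Prod.mk.injEq] at hst'
      obtain ⟨rfl, rfl⟩ := hst'
      simp only [Equiv.swap_apply_left, Equiv.swap_apply_right]
      exact ⟨by rw [Fin.lt_def]; omega, hσ⟩
    · refine ⟨?_, hinv⟩
      have := hswap _ _ hab
      simp only [Equiv.swap_apply_self] at this
      refine this fun h => ?_
      simp only [Prod.mk.injEq] at h
      rw [h.1, h.2] at hinv
      exact hσ.not_gt hinv

lemma manEps_mul_swap {n r : ℕ} (q : Matrix (Fin n) (Fin n) ℂ) (I : Fin r → Fin n)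
    (σ : Equiv.Perm (Fin r)) {s t : Fin r} (hst : (s : ℕ) + 1 = t) (hσ : σ s < σ t) :
    manEps q I (σ * Equiv.swap s t) = -q (I (σ t)) (I (σ s)) * manEps q I σ := by
  have hnot : (s, t) ∉ (inversionPairs σ).map
      ((Equiv.swap s t).prodCongr (Equiv.swap s t)).toEmbedding := by
    simp only [Finset.mem_map_equiv, inversionPairs, Finset.mem_filter, Finset.mem_univ,
      true_and]
    simp only [Equiv.prodCongr_symm, Equiv.prodCongr_apply, Equiv.symm_swap, Prod.map,
      Equiv.swap_apply_left, Equiv.swap_apply_right, Fin.lt_def]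
    omega
  change ∏ st ∈ inversionPairs (σ * Equiv.swap s t), _ = _ * ∏ st ∈ inversionPairs σ, _
  rw [inversionPairs_mul_swap σ hst hσ, Finset.prod_insert hnot, Finset.prod_map]
  simp [Equiv.swap_apply_self]

lemma IsManin.bracket {R : Type*} [Ring R] [Algebra ℂ R] {n m : ℕ}
    {q : Matrix (Fin n) (Fin n) ℂ} {p : Matrix (Fin m) (Fin m) ℂ} {M : Matrix (Fin n) (Fin m) R}
    (hM : IsManin q p M) (hp : IsParametric p) {i j : Fin n} (hij : i < j) (k l : Fin m) :
    M i k * M j l - q j i • (M j k * M i l) + p k l • (M i l * M j k)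
      - (q j i * p k l) • (M j l * M i k) = 0 := by
  rcases lt_trichotomy k l with hkl | rfl | hkl
  · rw [← hM.2 i j k l hij hkl]
    abel
  · rw [hp.2.2 k, one_smul, mul_one, hM.1 i j k hij]
    abel
  · -- multiply the relation for `(l, k)` by `p k l = (p l k)⁻¹`
    have h := congrArg (p k l • ·) (hM.2 i j l k hij hkl)
    simp only [smul_zero, smul_sub, smul_add, smul_smul, hp.2.1 k l, one_smul,
      mul_left_comm (p k l), mul_one] at h
    rw [← h, mul_comm (q j i)]
    abel

def cdetTerm {R : Type*} [Ring R] [Algebra ℂ R] {n m r : ℕ} (q : Matrix (Fin n) (Fin n) ℂ)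
    (M : Matrix (Fin n) (Fin m) R) (I : Fin r → Fin n) (J : Fin r → Fin m)
    (σ : Equiv.Perm (Fin r)) : R :=
  manEps q I σ • (List.ofFn fun a => M (I (σ a)) (J a)).prod

lemma cdet_eq_sum_cdetTerm {R : Type*} [Ring R] [Algebra ℂ R] {n m r : ℕ}
    (q : Matrix (Fin n) (Fin n) ℂ) (M : Matrix (Fin n) (Fin m) R) (I : Fin r → Fin n)
    (J : Fin r → Fin m) : cdet q M I J = ∑ σ, cdetTerm q M I J σ :=
  rfl

section Swap

variable {R : Type*} [Ring R] [Algebra ℂ R] {n m r : ℕ} {q : Matrix (Fin n) (Fin n) ℂ}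
  {p : Matrix (Fin m) (Fin m) ℂ} {M : Matrix (Fin n) (Fin m) R} {I : Fin r → Fin n}

lemma cdetTerm_add_cdetTerm_mul_swap (hM : IsManin q p M) (hp : IsParametric p)
    (hI : StrictMono I) (J : Fin r → Fin m) {s t : Fin r} (hst : (s : ℕ) + 1 = t)
    (σ : Equiv.Perm (Fin r)) (hσ : σ s < σ t) :
    (cdetTerm q M I J σ + p (J s) (J t) • cdetTerm q M I (J ∘ Equiv.swap s t) σ)
      + (cdetTerm q M I J (σ * Equiv.swap s t)
        + p (J s) (J t) • cdetTerm q M I (J ∘ Equiv.swap s t) (σ * Equiv.swap s t)) = 0 := by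
  obtain ⟨A, B, hAB⟩ := List.exists_prod_ofFn_eq_mul_mul (fun a => M (I (σ a)) (J a)) s t hst
  have hfix : ∀ a, a ≠ s → a ≠ t → Equiv.swap s t a = a :=
    fun a => Equiv.swap_apply_of_ne_of_ne
  simp only [cdetTerm]
  rw [hAB _ fun _ _ _ => rfl, hAB _ fun a h1 h2 => by simp [hfix a h1 h2],
    hAB _ fun a h1 h2 => by simp [hfix a h1 h2], hAB _ fun a h1 h2 => by simp [hfix a h1 h2]]
  simp only [Equiv.Perm.mul_apply, Function.comp_apply, Equiv.swap_apply_left,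
    Equiv.swap_apply_right]
  rw [manEps_mul_swap q I σ hst hσ]
  have hbracket := hM.bracket hp (hI hσ) (J s) (J t)
  set i := I (σ s)
  set j := I (σ t)
  set k := J s
  set l := J t
  have key : manEps q I σ • (A * (M i k * M j l - q j i • (M j k * M i l)
      + p k l • (M i l * M j k) - (q j i * p k l) • (M j l * M i k)) * B) = 0 := by
    rw [hbracket, mul_zero, zero_mul, smul_zero]
  rw [← key]
  simp only [mul_add, mul_sub, add_mul, sub_mul, mul_smul_comm, smul_mul_assoc, smul_add,
    smul_sub, smul_smul]
  module

lemma cdet_add_smul_cdet_comp_swap (hM : IsManin q p M) (hp : IsParametric p)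
    (hI : StrictMono I) (J : Fin r → Fin m) {s t : Fin r} (hst : (s : ℕ) + 1 = t) :
    cdet q M I J + p (J s) (J t) • cdet q M I (J ∘ Equiv.swap s t) = 0 := by
  set T := Equiv.swap s t
  have hT : T ≠ 1 := by
    intro h
    have := congrArg (· s) h
    simp only [T, Equiv.swap_apply_left, Equiv.Perm.coe_one, id_eq, Fin.ext_iff] at this
    omega
  have hcancel : ∀ σ : Equiv.Perm (Fin r),
      (cdetTerm q M I J σ + p (J s) (J t) • cdetTerm q M I (J ∘ T) σ)
        + (cdetTerm q M I J (σ * T) + p (J s) (J t) • cdetTerm q M I (J ∘ T) (σ * T))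
        = 0 := by
    intro σ
    rcases lt_or_gt_of_ne (σ.injective.ne (Fin.ne_of_val_ne (by omega) : s ≠ t)) with h | h
    · exact cdetTerm_add_cdetTerm_mul_swap hM hp hI J hst σ h
    · have := cdetTerm_add_cdetTerm_mul_swap hM hp hI J hst (σ * T) (by simpa [T] using h)
      rwa [mul_assoc, Equiv.swap_mul_self, mul_one, add_comm] at this
  rw [cdet_eq_sum_cdetTerm, cdet_eq_sum_cdetTerm, Finset.smul_sum, ← Finset.sum_add_distrib]
  exact Finset.sum_involution (fun σ _ => σ * T) (fun σ _ => hcancel σ)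
    (fun σ _ _ => by simpa using hT) (fun _ _ => Finset.mem_univ _)
    (fun σ _ => by simp [T, mul_assoc])

lemma cdet_comp_swap (hM : IsManin q p M) (hp : IsParametric p) (hI : StrictMono I)
    (J : Fin r → Fin m) {s t : Fin r} (hst : (s : ℕ) + 1 = t) :
    cdet q M I (J ∘ Equiv.swap s t) = -p (J t) (J s) • cdet q M I J := by
  have h := cdet_add_smul_cdet_comp_swap hM hp hI (J ∘ Equiv.swap s t) hst
  have hJ : (J ∘ Equiv.swap s t) ∘ Equiv.swap s t = J := by ext a; simp
  simp only [hJ, Function.comp_apply, Equiv.swap_apply_left, Equiv.swap_apply_right] at h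
  rw [neg_smul, eq_neg_iff_add_eq_zero, h]

end Swap

lemma Fin.cycleIcc_eq_swap {r : ℕ} {c d : Fin r} (h : (c : ℕ) + 1 = d) :
    Fin.cycleIcc c d = Equiv.swap c d := by
  have : NeZero r := ⟨by omega⟩
  have hcd : c < d := by rw [Fin.lt_def]; omega
  refine Equiv.ext fun x => ?_
  rcases lt_trichotomy x c with hx | rfl | hx
  · rw [Fin.cycleIcc_of_lt hx, Equiv.swap_apply_of_ne_of_ne hx.ne (hx.trans hcd).ne]
  · rw [Fin.cycleIcc_of_ge_of_lt le_rfl hcd, Equiv.swap_apply_left]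
    exact Fin.ext <| by
      rw [Fin.val_add, Fin.val_one', Nat.add_mod_mod, Nat.mod_eq_of_lt (by omega), h]
  rcases eq_or_lt_of_le (show d ≤ x by rw [Fin.le_def]; rw [Fin.lt_def] at hx; omega) with
    rfl | hdx
  · rw [Fin.cycleIcc_of_last hcd.le, Equiv.swap_apply_right]
  · rw [Fin.cycleIcc_of_gt hdx, Equiv.swap_apply_of_ne_of_ne hx.ne' hdx.ne']

section Rotation

variable {R : Type*} [Ring R] [Algebra ℂ R] {n m r : ℕ} {q : Matrix (Fin n) (Fin n) ℂ}
  {p : Matrix (Fin m) (Fin m) ℂ} {M : Matrix (Fin n) (Fin m) R} {I : Fin r → Fin n}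

lemma cdet_comp_cycleIcc (hM : IsManin q p M) (hp : IsParametric p) (hI : StrictMono I)
    (J : Fin r → Fin m) {i c : Fin r} (hic : i ≤ c) :
    cdet q M I (J ∘ Fin.cycleIcc i c) =
      (∏ v ∈ Finset.Ioc i c, -p (J v) (J i)) • cdet q M I J := by
  have : NeZero r := ⟨by omega⟩
  obtain ⟨d, hd⟩ : ∃ d, (c : ℕ) = i + d := ⟨c - i, by rw [Fin.le_def] at hic; omega⟩
  induction d generalizing c with
  | zero =>
    obtain rfl : c = i := Fin.ext hd
    rw [Fin.cycleIcc_eq]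
    simp
  | succ d ih =>
    set c' : Fin r := ⟨i + d, by omega⟩
    have hc' : (c' : ℕ) + 1 = c := by simp [c', hd]; omega
    have hic' : i ≤ c' := by rw [Fin.le_def]; simp [c']
    have hc'c : c' < c := by rw [Fin.lt_def]; omega
    have hrot : ⇑(Fin.cycleIcc i c) = Fin.cycleIcc i c' ∘ Equiv.swap c' c := by
      rw [← Fin.cycleIcc_eq_swap hc', Fin.cycleIcc.trans hic' hc'c.le]
    have hIoc : Finset.Ioc i c = insert c (Finset.Ioc i c') := by
      ext v
      simp only [Finset.mem_Ioc, Finset.mem_insert, Fin.lt_def, Fin.le_def, Fin.ext_iff, c']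
      omega
    rw [hrot, ← Function.comp_assoc, cdet_comp_swap hM hp hI _ hc', ih hic' rfl, smul_smul,
      hIoc, Finset.prod_insert (by simp [hc'c.not_ge])]
    simp [Fin.cycleIcc_of_gt hc'c, Fin.cycleIcc_of_last hic']

lemma cdet_eq_zero_of_adjacent_eq (hM : IsManin q p M) (hp : IsParametric p)
    (hI : StrictMono I) (J : Fin r → Fin m) {s t : Fin r} (hst : (s : ℕ) + 1 = t)
    (hJ : J s = J t) : cdet q M I J = 0 := by
  have hfix : J ∘ Equiv.swap s t = J := by
    ext a
    rcases eq_or_ne a s with rfl | has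
    · simp [hJ]
    rcases eq_or_ne a t with rfl | hat
    · simp [hJ]
    · simp [Equiv.swap_apply_of_ne_of_ne has hat]
  have h := cdet_comp_swap hM hp hI J hst
  rw [hfix, hJ, hp.2.2, neg_smul, one_smul, eq_neg_iff_add_eq_zero, ← two_smul ℂ] at h
  exact (smul_eq_zero.mp h).resolve_left two_ne_zero

lemma cdet_eq_zero_of_eq (hM : IsManin q p M) (hp : IsParametric p) (hI : StrictMono I)
    (J : Fin r → Fin m) {s t : Fin r} (hst : s < t) (hJ : J s = J t) : cdet q M I J = 0 := by
  rw [Fin.lt_def] at hst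
  have : NeZero r := ⟨by omega⟩
  set u : Fin r := ⟨t - 1, by omega⟩
  have hsu : s ≤ u := by rw [Fin.le_def]; simp [u]; omega
  have hut : (u : ℕ) + 1 = t := by simp [u]; omega
  have hut' : u < t := by rw [Fin.lt_def]; omega
  -- rotate column `s` next to column `t`
  have h := cdet_eq_zero_of_adjacent_eq hM hp hI (J ∘ Fin.cycleIcc s u) hut
    (by simp [Fin.cycleIcc_of_last hsu, Fin.cycleIcc_of_gt hut', hJ])
  rw [cdet_comp_cycleIcc hM hp hI J hsu, smul_eq_zero] at h
  exact h.resolve_left (Finset.prod_ne_zero_iff.2 fun v _ => neg_ne_zero.2 (hp.1 _ _))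

end Rotation

def insertLast {m : ℕ} (k : Fin (m + 1)) (τ : Equiv.Perm (Fin m)) : Equiv.Perm (Fin (m + 1)) :=
  (finSuccEquivLast.trans (Equiv.optionCongr τ)).trans (finSuccEquiv' k).symm

@[simp] lemma insertLast_castSucc {m : ℕ} (k : Fin (m + 1)) (τ : Equiv.Perm (Fin m))
    (a : Fin m) :
    insertLast k τ a.castSucc = k.succAbove (τ a) := by
  simp [insertLast, finSuccEquiv'_symm_some]

@[simp] lemma insertLast_last {m : ℕ} (k : Fin (m + 1)) (τ : Equiv.Perm (Fin m)) :
    insertLast k τ (Fin.last m) = k := by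
  simp [insertLast]

lemma insertLast_bijective {m : ℕ} :
    Function.Bijective fun x : Fin (m + 1) × Equiv.Perm (Fin m) => insertLast x.1 x.2 := by
  rw [Fintype.bijective_iff_injective_and_card]
  refine ⟨fun ⟨k, τ⟩ ⟨k', τ'⟩ h => ?_,
    by simp [Fintype.card_perm, Nat.factorial_succ]⟩
  obtain rfl : k = k' := by simpa using congrArg (· (Fin.last m)) h
  refine Prod.ext rfl (Equiv.ext fun a => Fin.succAbove_right_injective (p := k) ?_)
  simpa using congrArg (· a.castSucc) h

lemma manEps_eq_prod_prod {n r : ℕ} (q : Matrix (Fin n) (Fin n) ℂ) (I : Fin r → Fin n)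
    (σ : Equiv.Perm (Fin r)) :
    manEps q I σ =
      ∏ s, ∏ t, if s < t ∧ σ t < σ s then -q (I (σ s)) (I (σ t)) else 1 := by
  rw [manEps, Finset.prod_filter, Fintype.prod_prod_type]

lemma manEps_insertLast {n m : ℕ} (q : Matrix (Fin n) (Fin n) ℂ) (I : Fin (m + 1) → Fin n)
    (k : Fin (m + 1)) (τ : Equiv.Perm (Fin m)) :
    manEps q I (insertLast k τ) =
      (∏ v ∈ Finset.Ioi k, -q (I v) (I k)) * manEps q (I ∘ k.succAbove) τ := by
  have hIoi : ∏ v ∈ Finset.Ioi k, -q (I v) (I k) =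
      ∏ a, if k < k.succAbove (τ a) then -q (I (k.succAbove (τ a))) (I k) else 1 := by
    rw [← Finset.filter_lt_eq_Ioi, Finset.prod_filter, Fin.prod_univ_succAbove _ k,
      if_neg (lt_irrefl k), one_mul, ← Equiv.prod_comp τ]
  rw [manEps_eq_prod_prod, manEps_eq_prod_prod, hIoi, ← Finset.prod_mul_distrib]
  simp [Fin.prod_univ_castSucc, Fin.succAbove_lt_succAbove_iff, (Fin.le_last _).not_gt, mul_comm]

lemma cdet_snoc_eq_sum {R : Type*} [Ring R] [Algebra ℂ R] {n m m' : ℕ}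
    (q : Matrix (Fin n) (Fin n) ℂ) (M : Matrix (Fin n) (Fin m') R) (I : Fin (m + 1) → Fin n)
    (J : Fin m → Fin m') (j : Fin m') :
    cdet q M I (Fin.snoc J j : Fin (m + 1) → Fin m') =
      ∑ k, (∏ v ∈ Finset.Ioi k, -q (I v) (I k)) •
        (cdet q M (I ∘ k.succAbove) J * M (I k) j) := by
  rw [cdet, ← Fintype.sum_bijective _ insertLast_bijective _ _ fun _ => rfl,
    Fintype.sum_prod_type]
  refine Finset.sum_congr rfl fun k _ => ?_
  rw [cdet, Finset.sum_mul, Finset.smul_sum]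
  refine Finset.sum_congr rfl fun τ _ => ?_
  rw [manEps_insertLast, List.ofFn_succ', List.prod_concat]
  simp [smul_smul]

lemma complOne_eq_succAbove {m : ℕ} (i : Fin (m + 1)) : complOne i = i.succAbove :=
  (Finset.orderEmbOfFin_unique _ (fun a => by simp [Fin.succAbove_ne])
    (Fin.strictMono_succAbove i)).symm

lemma cycleIcc_last_eq_insertLast_one {m : ℕ} (k : Fin (m + 1)) :
    Fin.cycleIcc k (Fin.last m) = insertLast k 1 := by
  refine Equiv.ext fun a => Fin.lastCases ?_ (fun a => ?_) a
  · simp [Fin.cycleIcc_of_last (Fin.le_last k)]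
  · simpa using congrFun (Fin.cycleIcc_comp_succAbove k _ (Fin.le_last k)) a

lemma snoc_succAbove_self {m : ℕ} (k : Fin (m + 1)) :
    (Fin.snoc k.succAbove k : Fin (m + 1) → Fin (m + 1)) = ⇑(Fin.cycleIcc k (Fin.last m)) := by
  rw [cycleIcc_last_eq_insertLast_one]
  funext a
  refine Fin.lastCases ?_ (fun a => ?_) a <;> simp

lemma append_complOne_self {m : ℕ} (k : Fin (m + 1)) :
    Fin.append (complOne k) ![k] = ⇑(insertLast k 1) := by
  rw [Fin.append_right_eq_snoc, complOne_eq_succAbove]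
  funext a
  refine Fin.lastCases ?_ (fun a => ?_) a <;> simp

lemma manEpsIdx_coe_perm {n : ℕ} (q : Matrix (Fin n) (Fin n) ℂ) (σ : Equiv.Perm (Fin n)) :
    manEpsIdx q ⇑σ = manEps q id σ := by
  simp [manEpsIdx, σ.injective, manEps]

lemma manEps_one {n r : ℕ} (q : Matrix (Fin n) (Fin n) ℂ) (I : Fin r → Fin n) :
    manEps q I 1 = 1 :=
  Finset.prod_eq_one fun st hst => by
    rw [Finset.mem_filter] at hst
    exact absurd hst.2.2 hst.2.1.not_gt

lemma manEpsIdx_append_complOne {m : ℕ} (q : Matrix (Fin (m + 1)) (Fin (m + 1)) ℂ)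
    (k : Fin (m + 1)) :
    manEpsIdx q (Fin.append (complOne k) ![k]) = ∏ v ∈ Finset.Ioi k, -q v k := by
  rw [append_complOne_self, manEpsIdx_coe_perm, manEps_insertLast, manEps_one, mul_one]
  rfl

theorem manin_inverse_general {R : Type*} [Ring R] [Algebra ℂ R] {n : ℕ}
    (q p : Matrix (Fin n) (Fin n) ℂ) (hp : IsParametric p)
    (M : Matrix (Fin n) (Fin n) R) (hM : IsManin q p M)
    (d : R) (hd : d * cdet q M id id = 1 ∧ cdet q M id id * d = 1)
    (N : Matrix (Fin n) (Fin n) R)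
    (hN : ∀ i j, N i j =
      ((manEpsIdx p (Fin.append (complOne i) ![i]))⁻¹
          * manEpsIdx q (Fin.append (complOne j) ![j])) •
        (d * cdet q M (complOne j) (complOne i))) :
    N * M = 1 ∧ ∀ M' : Matrix (Fin n) (Fin n) R, M * M' = 1 → M' * M = 1 → M' = N := by
  have hNM : N * M = 1 := by
    rcases n with _ | m
    · ext i
      exact i.elim0
    ext i j
    have hrow : (N * M) i j =
        (∏ v ∈ Finset.Ioi i, -p v i)⁻¹ • (d * cdet q M id (Fin.snoc i.succAbove j)) := by
      simp only [Matrix.mul_apply, hN, manEpsIdx_append_complOne]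
      simp only [complOne_eq_succAbove, cdet_snoc_eq_sum, Function.id_comp, id_eq,
        Finset.mul_sum, Finset.smul_sum, mul_smul_comm, smul_mul_assoc, mul_assoc, smul_smul]
    rcases eq_or_ne i j with rfl | hij
    · have hrot := cdet_comp_cycleIcc hM hp strictMono_id id (Fin.le_last i)
      simp only [Function.id_comp, id_eq, ← snoc_succAbove_self] at hrot
      rw [← Fin.top_eq_last, Finset.Ioc_top] at hrot
      have hε : ∏ v ∈ Finset.Ioi i, -p v i ≠ 0 :=
        Finset.prod_ne_zero_iff.2 fun v _ => neg_ne_zero.2 (hp.1 v i)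
      rw [hrow, Matrix.one_apply_eq, hrot, mul_smul_comm, smul_smul, inv_mul_cancel₀ hε,
        one_smul, hd.1]
    · obtain ⟨a, rfl⟩ := Fin.exists_succAbove_eq hij.symm
      rw [hrow, Matrix.one_apply_ne hij, cdet_eq_zero_of_eq hM hp strictMono_id _
        (Fin.castSucc_lt_last a) (by simp), mul_zero, smul_zero]
  exact ⟨hNM, fun M' hMM' _ => (left_inv_eq_right_inv hNM hMM').symm⟩

/-- Inverse of a Manin matrix: the matrix `N` with entries
`N_{ij} = ε(p̂, i^c⊕(i))⁻¹ ε(q̂, j^c⊕(j)) cdet_{q̂}(M)⁻¹ cdet_{q̂}(M_{j^c i^c})`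
satisfies `N M = 1`, and any two-sided inverse of `M` equals `N`. -/
theorem manin_inverse {R : Type*} [Ring R] [Algebra ℂ R] {n : ℕ}
    (q p : Matrix (Fin n) (Fin n) ℂ) (hq : IsParametric q) (hp : IsParametric p)
    (M : Matrix (Fin n) (Fin n) R) (hM : IsManin q p M)
    (d : R) (hd : d * cdet q M id id = 1 ∧ cdet q M id id * d = 1)
    (N : Matrix (Fin n) (Fin n) R)
    (hN : ∀ i j, N i j =
      ((manEpsIdx p (Fin.append (complOne i) ![i]))⁻¹
          * manEpsIdx q (Fin.append (complOne j) ![j])) •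
        (d * cdet q M (complOne j) (complOne i))) :
    N * M = 1 ∧ ∀ M' : Matrix (Fin n) (Fin n) R, M * M' = 1 → M' * M = 1 → M' = N :=
  manin_inverse_general q p hp M hM d hd N hN
end
end

section
/- Let M be an n×m (q̂,p̂)-Manin matrix over R. Then for every k≥1, the following identities of matrices over R (linear maps (ℂ^m)^{⊗k}→(ℂ^n)^{⊗k} with entries in R) hold: A_{q̂}^{(k)} M_1 ⋯ M_k = A_{q̂}^{(k)} M_1 ⋯ M_k A_{p̂}^{(k)} and M_1 ⋯ M_k S_{p̂}^{(k)} = S_{q̂}^{(k)} M_1 ⋯ M_k S_{p̂}^{(k)}. -/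
open scoped BigOperators Classical

noncomputable section

/-- The operator `P_{q̂}^σ` on `(ℂ^n)^{⊗k}`: the image of `σ ∈ S_k` under the action
generated by `(a,a+1) ↦ P_{q̂}` in adjacent tensor factors; explicitly
`P_{q̂}^σ e_{b_1}⊗⋯⊗e_{b_k} = (∏_{s<t, σ(s)>σ(t)} q_{b_s b_t}) e_{b_{σ⁻¹(1)}}⊗⋯⊗e_{b_{σ⁻¹(k)}}`. -/
def permMat {n k : ℕ} (q : Matrix (Fin n) (Fin n) ℂ) (σ : Equiv.Perm (Fin k)) :
    Matrix (Fin k → Fin n) (Fin k → Fin n) ℂ :=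
  Matrix.of fun a b =>
    if a = b ∘ ⇑σ⁻¹ then
      ∏ st ∈ Finset.univ.filter (fun st : Fin k × Fin k => st.1 < st.2 ∧ σ st.2 < σ st.1),
        q (b st.1) (b st.2)
    else 0

/-- The normalized `q̂`-symmetrizer `S_{q̂}^{(k)} = (1/k!) ∑_{σ∈S_k} P_{q̂}^σ`. -/
def manSym (n k : ℕ) (q : Matrix (Fin n) (Fin n) ℂ) :
    Matrix (Fin k → Fin n) (Fin k → Fin n) ℂ :=
  ((k.factorial : ℂ))⁻¹ • ∑ σ : Equiv.Perm (Fin k), permMat q σ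

/-- The normalized `q̂`-antisymmetrizer `A_{q̂}^{(k)} = (1/k!) ∑_{σ∈S_k} sgn(σ) P_{q̂}^σ`. -/
def manAsym (n k : ℕ) (q : Matrix (Fin n) (Fin n) ℂ) :
    Matrix (Fin k → Fin n) (Fin k → Fin n) ℂ :=
  ((k.factorial : ℂ))⁻¹ •
    ∑ σ : Equiv.Perm (Fin k), ((Equiv.Perm.sign σ : ℤ) : ℂ) • permMat q σ

/-- `M_1 M_2 ⋯ M_k : (ℂ^m)^{⊗k} → (ℂ^n)^{⊗k}`, a matrix over `R`, where `M_a` is `M`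
acting in the `a`-th tensor factor. -/
def tensorPow {R : Type*} [Ring R] {n m : ℕ} (M : Matrix (Fin n) (Fin m) R) (k : ℕ) :
    Matrix (Fin k → Fin n) (Fin k → Fin m) R :=
  Matrix.of fun a b => (List.ofFn fun i : Fin k => M (a i) (b i)).prod

/-!
The operators `P^σ` form a representation of `S_k` (this is where `q_ij q_ji = 1` enters), so
`A_q P^q_σ = sgn σ • A_q` and `P^p_σ S_p = S_p`. For an adjacent transposition `s = (a, a+1)` the
Manin relations in the tensor factors `a, a+1` say exactly `(1 - P^q_s) T (1 + P^p_s) = 0`, where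
`T = M_1 ⋯ M_k`. Since `A_q (1 - P^q_s) = 2 A_q` and `(1 + P^p_s) S_p = 2 S_p`, this gives
`A_q T P^p_s = -A_q T` and `P^q_s T S_p = T S_p`. Adjacent transpositions generate `S_k`, so
`A_q T P^p_σ = sgn σ • A_q T` and `P^q_σ T S_p = T S_p` for all `σ`, and averaging over `S_k`
yields both identities.
-/

open Equiv Finset

lemma Fintype.prod_eq_prod_lt_mul_swap {M : Type*} [CommMonoid M] {α : Type*} [Fintype α]
    [LinearOrder α] (g : α × α → M) (hg : ∀ i, g (i, i) = 1) :
    ∏ x, g x = ∏ x ∈ univ.filter (fun x : α × α => x.1 < x.2), g x * g x.swap := by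
  rw [prod_mul_distrib, ← prod_filter_mul_prod_filter_not univ (fun x : α × α => x.1 < x.2)]
  congr 1
  rw [← Finset.prod_subset (s₁ := univ.filter fun x : α × α => x.2 < x.1)]
  · exact prod_nbij' Prod.swap Prod.swap (by simp) (by simp) (by simp) (by simp) (by simp)
  · intro x
    simp only [mem_filter, mem_univ, true_and]
    exact lt_asymm
  · intro x hx hx'
    simp only [mem_filter, mem_univ, true_and, not_lt] at hx hx'
    rw [show x = (x.1, x.1) from Prod.ext rfl (le_antisymm hx hx'), hg]

lemma List.exists_prod_ofFn_eq_mul_mul_s7 {M : Type*} [Monoid M] {k : ℕ} (a a' : Fin k)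
    (ha : (a : ℕ) + 1 = a') (F₀ : Fin k → M) :
    ∃ L D : M, ∀ F : Fin k → M, (∀ i, i ≠ a → i ≠ a' → F i = F₀ i) →
      (ofFn F).prod = L * (F a * F a') * D := by
  refine ⟨((ofFn F₀).take a).prod, ((ofFn F₀).drop (a + 2)).prod, fun F hF => ?_⟩
  have hF' : ∀ i : Fin k, ((i : ℕ) < a ∨ (a : ℕ) + 2 ≤ i) → F i = F₀ i := fun i hi =>
    hF i (fun h => by subst h; omega) (fun h => by subst h; omega)
  have htake : (ofFn F).take a = (ofFn F₀).take a :=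
    ext_getElem (by simp) fun i h _ => by
      simp only [length_take, length_ofFn, lt_min_iff] at h
      simpa using hF' ⟨i, h.2⟩ (Or.inl h.1)
  have hdrop : (ofFn F).drop (a + 2) = (ofFn F₀).drop (a + 2) :=
    ext_getElem (by simp) fun i _ _ => by simpa using hF' _ (Or.inr (by simp))
  have hsplit : ((ofFn F).take (a + 2)).prod = ((ofFn F).take a).prod * (F a * F a') := by
    rw [prod_take_succ _ _ (by simp [ha]), prod_take_succ _ _ (by simp), mul_assoc]
    congr 2 <;> simp [ha]
  rw [← prod_take_mul_prod_drop _ (a + 2), hsplit, htake, hdrop]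

lemma Equiv.Perm.induction_on_adjacent_swap {k : ℕ} {P : Perm (Fin k) → Prop}
    (σ : Perm (Fin k)) (one : P 1)
    (adj : ∀ a a' : Fin k, (a : ℕ) + 1 = a' → P (swap a a'))
    (mul : ∀ σ τ, P σ → P τ → P (σ * τ)) : P σ := by
  cases k with
  | zero => rwa [Subsingleton.elim σ 1]
  | succ k =>
    have hσ : σ ∈ Submonoid.closure (Set.range fun i : Fin k => swap i.castSucc i.succ) := by
      rw [mclosure_swap_castSucc_succ]
      trivial
    induction hσ using Submonoid.closure_induction with
    | mem _ h => obtain ⟨i, rfl⟩ := h; exact adj _ _ (by simp)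
    | one => exact one
    | mul σ τ _ _ hσ hτ => exact mul σ τ hσ hτ

lemma Equiv.Perm.cast_sign_mul_self {α S : Type*} [DecidableEq α] [Fintype α] [Ring S]
    (σ : Perm α) : ((Perm.sign σ : ℤ) : S) * ((Perm.sign σ : ℤ) : S) = 1 := by
  rw [← Int.cast_mul, ← Units.val_mul, Int.units_mul_self, Units.val_one, Int.cast_one]

section InversionProd

variable {n k : ℕ} (q : Matrix (Fin n) (Fin n) ℂ)

def inversionProd (σ : Perm (Fin k)) (b : Fin k → Fin n) : ℂ :=
  ∏ st ∈ univ.filter (fun st : Fin k × Fin k => st.1 < st.2 ∧ σ st.2 < σ st.1),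
    q (b st.1) (b st.2)

lemma permMat_apply (σ : Perm (Fin k)) (a b : Fin k → Fin n) :
    permMat q σ a b = if a = b ∘ ⇑σ⁻¹ then inversionProd q σ b else 0 := rfl

lemma inversionProd_one (b : Fin k → Fin n) : inversionProd q 1 b = 1 :=
  prod_eq_one fun _ hst => absurd (mem_filter.mp hst).2.1 (mem_filter.mp hst).2.2.asymm

lemma inversionProd_eq_prod_ite (σ : Perm (Fin k)) (b : Fin k → Fin n) :
    inversionProd q σ b = ∏ st : Fin k × Fin k,
      if st.1 < st.2 ∧ σ st.2 < σ st.1 then q (b st.1) (b st.2) else 1 :=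
  prod_filter _ _

lemma inversionProd_comp_inv (σ τ : Perm (Fin k)) (b : Fin k → Fin n) :
    inversionProd q σ (b ∘ ⇑τ⁻¹) = ∏ st : Fin k × Fin k,
      if τ st.1 < τ st.2 ∧ σ (τ st.2) < σ (τ st.1) then q (b st.1) (b st.2) else 1 := by
  rw [inversionProd_eq_prod_ite]
  exact (Fintype.prod_equiv (τ.prodCongr τ) _ _ fun st => by simp).symm

-- Pairing `(s, t)` with `(t, s)` leaves one factor per pair `s < t`; when `τ` inverts the pair
-- and `σ` restores it, the two contributions are `q_ij q_ji = 1`.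
lemma inversionProd_mul (hq : ∀ i j, q i j * q j i = 1) (σ τ : Perm (Fin k))
    (b : Fin k → Fin n) :
    inversionProd q (σ * τ) b = inversionProd q σ (b ∘ ⇑τ⁻¹) * inversionProd q τ b := by
  rw [inversionProd_comp_inv, inversionProd_eq_prod_ite, inversionProd_eq_prod_ite,
    ← prod_mul_distrib, Fintype.prod_eq_prod_lt_mul_swap _ (by simp),
    Fintype.prod_eq_prod_lt_mul_swap _ (by simp)]
  refine prod_congr rfl fun st hst => ?_
  obtain ⟨s, t⟩ := st
  simp only [mem_filter, mem_univ, true_and] at hst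
  have hτ : τ s ≠ τ t := τ.injective.ne hst.ne
  have hστ : σ (τ s) ≠ σ (τ t) := σ.injective.ne hτ
  simp only [Perm.mul_apply, Prod.swap, hst, hst.not_gt, true_and, false_and, if_false]
  rcases hτ.lt_or_gt with h | h <;> rcases hστ.lt_or_gt with h' | h' <;>
    simp [h, h', h.not_gt, h'.not_gt, hq]

lemma inversionProd_swap_adjacent (a a' : Fin k) (ha : (a : ℕ) + 1 = a') (b : Fin k → Fin n) :
    inversionProd q (swap a a') b = q (b a) (b a') := by
  have : univ.filter (fun st : Fin k × Fin k =>
      st.1 < st.2 ∧ swap a a' st.2 < swap a a' st.1) = {(a, a')} := by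
    ext ⟨s, t⟩
    simp only [mem_filter, mem_univ, true_and, mem_singleton, Prod.mk.injEq, swap_apply_def,
      Fin.lt_def, Fin.ext_iff]
    split_ifs <;> omega
  rw [inversionProd, this, prod_singleton]

lemma permMat_one : permMat q (1 : Perm (Fin k)) = 1 := by
  ext a b
  simp [permMat_apply, inversionProd_one, Matrix.one_apply]

lemma permMat_mul (hq : ∀ i j, q i j * q j i = 1) (σ τ : Perm (Fin k)) :
    permMat q (σ * τ) = permMat q σ * permMat q τ := by
  ext a b
  rw [Matrix.mul_apply, sum_eq_single (b ∘ ⇑τ⁻¹)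
    (fun c _ hc => by rw [permMat_apply q τ, if_neg hc, mul_zero]) (by simp)]
  simp only [permMat_apply, inversionProd_mul q hq, mul_inv_rev, Perm.coe_mul, if_true,
    Function.comp_assoc]
  split_ifs <;> ring

end InversionProd

section Symmetrizers

variable {n m k : ℕ}

lemma manAsym_mul_permMat {q : Matrix (Fin n) (Fin n) ℂ} (hq : ∀ i j, q i j * q j i = 1)
    (σ : Perm (Fin k)) :
    manAsym n k q * permMat q σ = ((Perm.sign σ : ℤ) : ℂ) • manAsym n k q := by
  simp only [manAsym, Matrix.smul_mul, Finset.sum_mul, smul_sum, ← permMat_mul q hq, smul_smul]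
  refine Fintype.sum_equiv (Equiv.mulRight σ) _ _ fun τ => ?_
  simp only [coe_mulRight, Perm.sign_mul, Units.val_mul, Int.cast_mul]
  congr 1
  linear_combination
    -((k.factorial : ℂ)⁻¹ * ((Perm.sign τ : ℤ) : ℂ)) * Perm.cast_sign_mul_self (S := ℂ) σ

lemma permMat_mul_manSym {p : Matrix (Fin m) (Fin m) ℂ} (hp : ∀ i j, p i j * p j i = 1)
    (σ : Perm (Fin k)) : permMat p σ * manSym m k p = manSym m k p := by
  simp only [manSym, Matrix.mul_smul, Finset.mul_sum, ← permMat_mul p hp]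
  congr 1
  exact Fintype.sum_equiv (Equiv.mulLeft σ) _ _ fun τ => rfl

end Symmetrizers

section MapToAlgebra

variable {R : Type*} [Ring R] [Algebra ℂ R] {n m k : ℕ}

lemma manAsym_map_eq (p : Matrix (Fin m) (Fin m) ℂ) :
    (manAsym m k p).map (algebraMap ℂ R) = ((k.factorial : ℂ))⁻¹ •
      ∑ σ : Perm (Fin k), ((Perm.sign σ : ℤ) : ℂ) • (permMat p σ).map (algebraMap ℂ R) := by
  change (Algebra.ofId ℂ R).mapMatrix _ = _
  simp only [manAsym, map_smul, map_sum]
  rfl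

lemma manSym_map_eq (q : Matrix (Fin n) (Fin n) ℂ) :
    (manSym n k q).map (algebraMap ℂ R) =
      ((k.factorial : ℂ))⁻¹ • ∑ σ : Perm (Fin k), (permMat q σ).map (algebraMap ℂ R) := by
  change (Algebra.ofId ℂ R).mapMatrix _ = _
  simp only [manSym, map_smul, map_sum]
  rfl

lemma permMat_map_mul_map {q : Matrix (Fin n) (Fin n) ℂ} (hq : ∀ i j, q i j * q j i = 1)
    (σ τ : Perm (Fin k)) :
    (permMat q (σ * τ)).map (algebraMap ℂ R) =
      (permMat q σ).map (algebraMap ℂ R) * (permMat q τ).map (algebraMap ℂ R) := by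
  rw [permMat_mul q hq, Matrix.map_mul]

lemma manAsym_map_mul_permMat_map {q : Matrix (Fin n) (Fin n) ℂ}
    (hq : ∀ i j, q i j * q j i = 1) (σ : Perm (Fin k)) :
    (manAsym n k q).map (algebraMap ℂ R) * (permMat q σ).map (algebraMap ℂ R) =
      ((Perm.sign σ : ℤ) : ℂ) • (manAsym n k q).map (algebraMap ℂ R) := by
  rw [← Matrix.map_mul, manAsym_mul_permMat hq]
  exact map_smul (Algebra.ofId ℂ R).mapMatrix _ _

lemma permMat_map_mul_manSym_map {p : Matrix (Fin m) (Fin m) ℂ}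
    (hp : ∀ i j, p i j * p j i = 1) (σ : Perm (Fin k)) :
    (permMat p σ).map (algebraMap ℂ R) * (manSym m k p).map (algebraMap ℂ R) =
      (manSym m k p).map (algebraMap ℂ R) := by
  rw [← Matrix.map_mul, permMat_mul_manSym hp]

lemma mul_manAsym_map_eq_self {ι : Type*} {p : Matrix (Fin m) (Fin m) ℂ}
    {X : Matrix ι (Fin k → Fin m) R}
    (h : ∀ σ : Perm (Fin k),
      X * (permMat p σ).map (algebraMap ℂ R) = ((Perm.sign σ : ℤ) : ℂ) • X) :
    X * (manAsym m k p).map (algebraMap ℂ R) = X := calc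
  _ = ((k.factorial : ℂ))⁻¹ • ∑ σ : Perm (Fin k),
      ((Perm.sign σ : ℤ) : ℂ) • (X * (permMat p σ).map (algebraMap ℂ R)) := by
    rw [manAsym_map_eq, Matrix.mul_smul, Matrix.mul_sum]
    simp only [Matrix.mul_smul]
  _ = ((k.factorial : ℂ))⁻¹ • ∑ _σ : Perm (Fin k), X := by
    simp only [h, smul_smul, Perm.cast_sign_mul_self, one_smul]
  _ = X := by
    rw [sum_const, card_univ, Fintype.card_perm, Fintype.card_fin, ← Nat.cast_smul_eq_nsmul ℂ,
      smul_smul, inv_mul_cancel₀ (Nat.cast_ne_zero.2 k.factorial_ne_zero), one_smul]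

lemma manSym_map_mul_eq_self {ι : Type*} {q : Matrix (Fin n) (Fin n) ℂ}
    {Y : Matrix (Fin k → Fin n) ι R}
    (h : ∀ σ : Perm (Fin k), (permMat q σ).map (algebraMap ℂ R) * Y = Y) :
    (manSym n k q).map (algebraMap ℂ R) * Y = Y := calc
  _ = ((k.factorial : ℂ))⁻¹ • ∑ σ : Perm (Fin k), (permMat q σ).map (algebraMap ℂ R) * Y := by
    rw [manSym_map_eq, Matrix.smul_mul, Matrix.sum_mul]
  _ = Y := by
    rw [sum_congr rfl fun σ _ => h σ, sum_const, card_univ, Fintype.card_perm, Fintype.card_fin,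
      ← Nat.cast_smul_eq_nsmul ℂ, smul_smul,
      inv_mul_cancel₀ (Nat.cast_ne_zero.2 k.factorial_ne_zero), one_smul]

lemma mul_permMat_map_apply {ι : Type*} (p : Matrix (Fin m) (Fin m) ℂ)
    (N : Matrix ι (Fin k → Fin m) R) (σ : Perm (Fin k)) (A : ι) (B : Fin k → Fin m) :
    (N * (permMat p σ).map (algebraMap ℂ R)) A B = inversionProd p σ B • N A (B ∘ ⇑σ⁻¹) := by
  rw [Matrix.mul_apply, sum_eq_single (B ∘ ⇑σ⁻¹)
    (fun C _ hC => by rw [Matrix.map_apply, permMat_apply, if_neg hC, map_zero, mul_zero])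
    (by simp), Matrix.map_apply, permMat_apply, if_pos rfl, Algebra.smul_def,
    Algebra.commutes]

lemma permMat_map_mul_apply {ι : Type*} (q : Matrix (Fin n) (Fin n) ℂ)
    (N : Matrix (Fin k → Fin n) ι R) (σ : Perm (Fin k)) (A : Fin k → Fin n) (B : ι) :
    ((permMat q σ).map (algebraMap ℂ R) * N) A B = inversionProd q σ (A ∘ ⇑σ) • N (A ∘ ⇑σ) B := by
  have hA : ∀ C : Fin k → Fin n, A = C ∘ ⇑σ⁻¹ ↔ C = A ∘ ⇑σ := fun C => by
    constructor <;> rintro rfl <;> ext <;> simp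
  rw [Matrix.mul_apply, sum_eq_single (A ∘ ⇑σ)
    (fun C _ hC => by
      rw [Matrix.map_apply, permMat_apply, if_neg (hC ∘ (hA C).1), map_zero, zero_mul])
    (by simp), Matrix.map_apply, permMat_apply, if_pos ((hA _).2 rfl), Algebra.smul_def]

end MapToAlgebra

section Manin

variable {R : Type*} [Ring R] [Algebra ℂ R] {n m k : ℕ}
  {q : Matrix (Fin n) (Fin n) ℂ} {p : Matrix (Fin m) (Fin m) ℂ} {M : Matrix (Fin n) (Fin m) R}

lemma IsManin.relation_of_lt (hp : ∀ k l, p k l * p l k = 1) (hM : IsManin q p M) {i j : Fin n}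
    (hij : i < j) (k l : Fin m) :
    M i k * M j l + p k l • (M i l * M j k)
      = q j i • (M j k * M i l) + (q j i * p k l) • (M j l * M i k) := by
  rcases lt_trichotomy k l with hkl | rfl | hkl
  · linear_combination (norm := module) hM.2 i j k l hij hkl
  · linear_combination (norm := module) (1 + p k k) • hM.1 i j k hij
  · linear_combination (norm := module) p k l • hM.2 i j l k hij hkl
      - hp k l • (M i k * M j l) + q j i • hp k l • (M j k * M i l)

lemma IsManin.relation (hq : IsParametric q) (hp : IsParametric p) (hM : IsManin q p M)
    (i j : Fin n) (k l : Fin m) :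
    M i k * M j l + p k l • (M i l * M j k)
      = q j i • (M j k * M i l) + (q j i * p k l) • (M j l * M i k) := by
  rcases lt_trichotomy i j with hij | rfl | hij
  · exact hM.relation_of_lt hp.2.1 hij k l
  · linear_combination (norm := module)
      -(hq.2.2 i • (M i k * M i l)) - p k l • hq.2.2 i • (M i l * M i k)
  · linear_combination (norm := module) -q j i • hM.relation_of_lt hp.2.1 hij k l
      - hq.2.1 j i • (M i k * M j l) - p k l • hq.2.1 j i • (M i l * M j k)

-- Entrywise this is the Manin relation for the rows `A a, A a'` and columns `B a, B a'`,
-- multiplied on the left and right by the factors of the other tensor positions.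
lemma IsManin.tensorPow_relation_swap (hq : IsParametric q) (hp : IsParametric p)
    (hM : IsManin q p M) (a a' : Fin k) (ha : (a : ℕ) + 1 = a') :
    (1 - (permMat q (swap a a')).map (algebraMap ℂ R)) * tensorPow M k *
      (1 + (permMat p (swap a a')).map (algebraMap ℂ R)) = 0 := by
  ext A B
  simp only [Matrix.sub_mul, Matrix.mul_add, Matrix.one_mul, Matrix.mul_one, Matrix.add_apply,
    Matrix.sub_apply, mul_permMat_map_apply, permMat_map_mul_apply, Matrix.zero_apply, swap_inv,
    inversionProd_swap_adjacent _ a a' ha, Function.comp_apply, swap_apply_left, swap_apply_right]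
  obtain ⟨L, D, hLD⟩ := List.exists_prod_ofFn_eq_mul_mul_s7 a a' ha fun i => M (A i) (B i)
  have hfix : ∀ i, i ≠ a → i ≠ a' → swap a a' i = i := fun i => swap_apply_of_ne_of_ne
  simp only [tensorPow, Matrix.of_apply]
  rw [hLD _ fun _ _ _ => rfl, hLD _ fun i h h' => by simp [hfix i h h'],
    hLD _ fun i h h' => by simp [hfix i h h'], hLD _ fun i h h' => by simp [hfix i h h']]
  simp only [Function.comp_apply, swap_apply_left, swap_apply_right]
  have h := congrArg (L * · * D) (hM.relation hq hp (A a) (A a') (B a) (B a'))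
  simp only [mul_add, add_mul, mul_smul_comm, smul_mul_assoc] at h
  linear_combination (norm := module) h

lemma IsManin.manAsym_mul_tensorPow_mul_permMat_swap (hq : IsParametric q)
    (hp : IsParametric p) (hM : IsManin q p M) (a a' : Fin k) (ha : (a : ℕ) + 1 = a') :
    (manAsym n k q).map (algebraMap ℂ R) * tensorPow M k *
        (permMat p (swap a a')).map (algebraMap ℂ R) =
      -((manAsym n k q).map (algebraMap ℂ R) * tensorPow M k) := by
  set A := (manAsym n k q).map (algebraMap ℂ R)
  have hA : A * (permMat q (swap a a')).map (algebraMap ℂ R) = -A := by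
    rw [manAsym_map_mul_permMat_map hq.2.1, Perm.sign_swap (Fin.ne_of_val_ne (by omega))]
    simp [A]
  have h2 :
      (2 : ℂ) • (A * tensorPow M k * (1 + (permMat p (swap a a')).map (algebraMap ℂ R))) = 0 :=
    calc _ = A * (1 - (permMat q (swap a a')).map (algebraMap ℂ R)) * tensorPow M k *
          (1 + (permMat p (swap a a')).map (algebraMap ℂ R)) := by
          rw [Matrix.mul_sub, Matrix.mul_one, hA, sub_neg_eq_add, ← two_smul ℂ, Matrix.smul_mul,
            Matrix.smul_mul]
      _ = 0 := by
        rw [Matrix.mul_assoc A, Matrix.mul_assoc A, hM.tensorPow_relation_swap hq hp a a' ha,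
          Matrix.mul_zero]
  have h := (smul_eq_zero.1 h2).resolve_left two_ne_zero
  rw [Matrix.mul_add, Matrix.mul_one] at h
  exact eq_neg_of_add_eq_zero_right h

lemma IsManin.permMat_swap_mul_tensorPow_mul_manSym (hq : IsParametric q)
    (hp : IsParametric p) (hM : IsManin q p M) (a a' : Fin k) (ha : (a : ℕ) + 1 = a') :
    (permMat q (swap a a')).map (algebraMap ℂ R) *
        (tensorPow M k * (manSym m k p).map (algebraMap ℂ R)) =
      tensorPow M k * (manSym m k p).map (algebraMap ℂ R) := by
  set S := (manSym m k p).map (algebraMap ℂ R)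
  have h2 :
      (2 : ℂ) • ((1 - (permMat q (swap a a')).map (algebraMap ℂ R)) * tensorPow M k * S) = 0 :=
    calc _ = (1 - (permMat q (swap a a')).map (algebraMap ℂ R)) * tensorPow M k *
          ((1 + (permMat p (swap a a')).map (algebraMap ℂ R)) * S) := by
          rw [Matrix.add_mul, Matrix.one_mul, permMat_map_mul_manSym_map hp.2.1, ← two_smul ℂ,
            Matrix.mul_smul]
      _ = 0 := by
        rw [← Matrix.mul_assoc, hM.tensorPow_relation_swap hq hp a a' ha, Matrix.zero_mul]
  have h := (smul_eq_zero.1 h2).resolve_left two_ne_zero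
  rw [Matrix.sub_mul, Matrix.sub_mul, Matrix.one_mul, sub_eq_zero] at h
  rw [← Matrix.mul_assoc, h]

lemma IsManin.manAsym_mul_tensorPow_mul_permMat (hq : IsParametric q) (hp : IsParametric p)
    (hM : IsManin q p M) (σ : Perm (Fin k)) :
    (manAsym n k q).map (algebraMap ℂ R) * tensorPow M k * (permMat p σ).map (algebraMap ℂ R) =
      ((Perm.sign σ : ℤ) : ℂ) • ((manAsym n k q).map (algebraMap ℂ R) * tensorPow M k) := by
  induction σ using Perm.induction_on_adjacent_swap with
  | one => simp [permMat_one]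
  | adj a a' ha =>
    rw [hM.manAsym_mul_tensorPow_mul_permMat_swap hq hp a a' ha,
      Perm.sign_swap (Fin.ne_of_val_ne (by omega))]
    simp
  | mul σ τ hσ hτ =>
    rw [permMat_map_mul_map hp.2.1, ← Matrix.mul_assoc, hσ, Matrix.smul_mul, hτ, smul_smul,
      Perm.sign_mul, Units.val_mul, Int.cast_mul, mul_comm]

lemma IsManin.permMat_mul_tensorPow_mul_manSym (hq : IsParametric q) (hp : IsParametric p)
    (hM : IsManin q p M) (σ : Perm (Fin k)) :
    (permMat q σ).map (algebraMap ℂ R) * (tensorPow M k * (manSym m k p).map (algebraMap ℂ R)) =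
      tensorPow M k * (manSym m k p).map (algebraMap ℂ R) := by
  induction σ using Perm.induction_on_adjacent_swap with
  | one => simp [permMat_one]
  | adj a a' ha => exact hM.permMat_swap_mul_tensorPow_mul_manSym hq hp a a' ha
  | mul σ τ hσ hτ => rw [permMat_map_mul_map hq.2.1, Matrix.mul_assoc, hτ, hσ]

end Manin

theorem manin_antisymmetrizer_symmetrizer_general {R : Type*} [Ring R] [Algebra ℂ R] {n m : ℕ}
    (q : Matrix (Fin n) (Fin n) ℂ) (p : Matrix (Fin m) (Fin m) ℂ)
    (hq : IsParametric q) (hp : IsParametric p)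
    (M : Matrix (Fin n) (Fin m) R) (hM : IsManin q p M) (k : ℕ) :
    (manAsym n k q).map (algebraMap ℂ R) * tensorPow M k
        = (manAsym n k q).map (algebraMap ℂ R) * tensorPow M k *
            (manAsym m k p).map (algebraMap ℂ R) ∧
    tensorPow M k * (manSym m k p).map (algebraMap ℂ R)
        = (manSym n k q).map (algebraMap ℂ R) * tensorPow M k *
            (manSym m k p).map (algebraMap ℂ R) := by
  refine ⟨(mul_manAsym_map_eq_self (hM.manAsym_mul_tensorPow_mul_permMat hq hp)).symm, ?_⟩
  rw [Matrix.mul_assoc, manSym_map_mul_eq_self (hM.permMat_mul_tensorPow_mul_manSym hq hp)]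

/-- For an `n×m` `(q̂,p̂)`-Manin matrix `M` and every `k ≥ 1`:
`A_{q̂}^{(k)} M_1⋯M_k = A_{q̂}^{(k)} M_1⋯M_k A_{p̂}^{(k)}` and
`M_1⋯M_k S_{p̂}^{(k)} = S_{q̂}^{(k)} M_1⋯M_k S_{p̂}^{(k)}`. -/
theorem manin_antisymmetrizer_symmetrizer {R : Type*} [Ring R] [Algebra ℂ R] {n m : ℕ}
    (q : Matrix (Fin n) (Fin n) ℂ) (p : Matrix (Fin m) (Fin m) ℂ)
    (hq : IsParametric q) (hp : IsParametric p)
    (M : Matrix (Fin n) (Fin m) R) (hM : IsManin q p M) (k : ℕ) (hk : 1 ≤ k) :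
    (manAsym n k q).map (algebraMap ℂ R) * tensorPow M k
        = (manAsym n k q).map (algebraMap ℂ R) * tensorPow M k *
            (manAsym m k p).map (algebraMap ℂ R) ∧
    tensorPow M k * (manSym m k p).map (algebraMap ℂ R)
        = (manSym n k q).map (algebraMap ℂ R) * tensorPow M k *
            (manSym m k p).map (algebraMap ℂ R) :=
  manin_antisymmetrizer_symmetrizer_general q p hq hp M hM k
end
end

section
/- (Cauchy–Binet formula for permanents) Let M be an n×m matrix over R and N an m×s (q̂,p̂)-Manin matrix over R (q̂ an m×m parametric matrix, p̂ an s×s parametric matrix) such that every entry of N commutes with every entry of M. Let I=(i_1,…,i_r) be any multi-index in {1,…,n} and K=(k_1≤…≤k_r) a non-decreasing multi-index in {1,…,s}. Then r̂per_{p̂}((MN)_{IK}) = ∑_J r̂per_{q̂}(M_{IJ}) · r̂per_{p̂}(N_{JK}), where the sum is over all non-decreasing multi-indices J of length r in {1,…,m}. -/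
open scoped BigOperators Classical

noncomputable section

/-- `μ(p̂, J, σ) = ∏_{s<t, σ(s)>σ(t)} p_{j_{σ(t)} j_{σ(s)}}`. -/
def manMu {s r : ℕ} (p : Matrix (Fin s) (Fin s) ℂ) (J : Fin r → Fin s)
    (σ : Equiv.Perm (Fin r)) : ℂ :=
  ∏ st ∈ Finset.univ.filter (fun st : Fin r × Fin r => st.1 < st.2 ∧ σ st.2 < σ st.1),
    p (J (σ st.2)) (J (σ st.1))

/-- `v(J) = ∏_a m_a!` where `m_a` is the number of occurrences of `a` in `J`. -/
def vmult {s r : ℕ} (J : Fin r → Fin s) : ℕ :=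
  ∏ a : Fin s, (Finset.univ.filter fun b : Fin r => J b = a).card.factorial

/-- The normalized row `p̂`-permanent
`r̂per_{p̂}(M_{IJ}) = v(J)⁻¹ ∑_{σ∈S_r} μ(p̂,J,σ) M_{i_1,j_{σ(1)}} ⋯ M_{i_r,j_{σ(r)}}`. -/
def rnper {R : Type*} [Ring R] [Algebra ℂ R] {n s r : ℕ} (p : Matrix (Fin s) (Fin s) ℂ)
    (M : Matrix (Fin n) (Fin s) R) (I : Fin r → Fin n) (J : Fin r → Fin s) : R :=
  ((vmult J : ℂ))⁻¹ • ∑ σ : Equiv.Perm (Fin r),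
    manMu p J σ • (List.ofFn fun a : Fin r => M (I a) (J (σ a))).prod


/-!
Expanding the entries of `M * N` and moving the entries of `M` to the left (they commute with
those of `N`) gives `rper_{p̂}((MN)_{IK}) = ∑_J M_{i_1 j_1} ⋯ M_{i_r j_r} · rper_{p̂}(N_{JK})`,
summed over all multi-indices `J`. For non-decreasing `K` the Manin relations make the
unnormalized permanent `rper_{p̂}(N_{JK})` pick up the factor `q_{j_b j_{b+1}}` when two adjacent
rows are exchanged, hence the factor `μ(q̂, J, τ)` under any permutation `τ` of the rows. Grouping
the `J` by their sorted rearrangement `J₀`, each `J₀ ∘ τ` being reached by `v(J₀)` permutations,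
the part of the sum over the orbit of `J₀` becomes `r̂per_{q̂}(M_{IJ₀}) · rper_{p̂}(N_{J₀K})`.
-/

open Finset

namespace Equiv.Perm

variable {r : ℕ}

def inversions (σ : Perm (Fin r)) : Finset (Fin r × Fin r) :=
  univ.filter fun st => st.1 < st.2 ∧ σ st.2 < σ st.1

@[simp]
theorem mem_inversions {σ : Perm (Fin r)} {st : Fin r × Fin r} :
    st ∈ inversions σ ↔ st.1 < st.2 ∧ σ st.2 < σ st.1 := by
  simp [inversions]

theorem swap_lt_swap_of_adjacent {b c x y : Fin r} (hbc : (b : ℕ) + 1 = c) (hxy : x < y)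
    (hne : (x, y) ≠ (b, c)) : swap b c x < swap b c y := by
  simp only [ne_eq, Prod.mk.injEq] at hne
  rw [Fin.lt_def] at hxy ⊢
  simp only [swap_apply_def]
  split_ifs <;> simp_all [Fin.ext_iff] <;> omega

theorem pair_notMem_map_inversions (σ : Perm (Fin r)) {b c : Fin r} (hbc : (b : ℕ) + 1 = c) :
    (b, c) ∉ (inversions σ).map (prodCongr (swap b c) (swap b c)).toEmbedding := by
  simp only [mem_map_equiv, prodCongr_symm, symm_swap, prodCongr_apply, Prod.map,
    swap_apply_left, swap_apply_right, mem_inversions, not_and]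
  exact fun hcb => absurd (Fin.lt_def.1 hcb) (by omega)

theorem inversions_mul_swap {σ : Perm (Fin r)} {b c : Fin r} (hbc : (b : ℕ) + 1 = c)
    (hσ : σ b < σ c) :
    inversions (σ * swap b c)
      = insert (b, c) ((inversions σ).map (prodCongr (swap b c) (swap b c)).toEmbedding) := by
  ext ⟨x, y⟩
  simp only [mem_insert, mem_map_equiv, mem_inversions, prodCongr_symm, symm_swap,
    prodCongr_apply, Prod.map, mul_apply, Prod.mk.injEq]
  constructor
  · rintro ⟨hxy, hinv⟩
    by_cases hxy' : (x, y) = (b, c)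
    · exact Or.inl (Prod.mk.inj hxy')
    · exact Or.inr ⟨swap_lt_swap_of_adjacent hbc hxy hxy', hinv⟩
  · rintro (⟨rfl, rfl⟩ | ⟨hxy, hinv⟩)
    · refine ⟨Fin.lt_def.2 (by omega), by simpa using hσ⟩
    · have hne : (swap b c x, swap b c y) ≠ (b, c) := by
        intro h
        obtain ⟨hx, hy⟩ := Prod.mk.inj h
        rw [hx, hy] at hinv
        exact hinv.not_gt hσ
      exact ⟨by simpa using swap_lt_swap_of_adjacent hbc hxy hne, hinv⟩

@[simp]
theorem inversions_one : inversions (1 : Perm (Fin r)) = ∅ :=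
  eq_empty_of_forall_notMem fun _ h => (mem_inversions.1 h).1.asymm (mem_inversions.1 h).2

theorem card_inversions_mul_swap {σ : Perm (Fin r)} {b c : Fin r} (hbc : (b : ℕ) + 1 = c)
    (hσ : σ b < σ c) : #(inversions (σ * swap b c)) = #(inversions σ) + 1 := by
  rw [inversions_mul_swap hbc hσ, card_insert_of_notMem (pair_notMem_map_inversions σ hbc),
    card_map]

theorem induction_on_adjacent_swaps {motive : Perm (Fin r) → Prop} (one : motive 1)
    (mul_swap : ∀ (τ : Perm (Fin r)) (b c : Fin r), (b : ℕ) + 1 = c → τ b < τ c →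
      motive τ → motive (τ * swap b c))
    (τ : Perm (Fin r)) : motive τ := by
  induction h : #(inversions τ) using Nat.strong_induction_on generalizing τ with
  | _ n ih =>
  by_cases hdesc : ∃ b c : Fin r, (b : ℕ) + 1 = c ∧ τ c < τ b
  · obtain ⟨b, c, hbc, hlt⟩ := hdesc
    have hτ : τ = τ * swap b c * swap b c := by simp [mul_assoc]
    have hlt' : (τ * swap b c) b < (τ * swap b c) c := by simpa using hlt
    rw [hτ, card_inversions_mul_swap hbc hlt'] at h
    rw [hτ]
    exact mul_swap _ b c hbc hlt' (ih #(inversions (τ * swap b c)) (by omega) _ rfl)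
  · simp only [not_exists, not_and, not_lt] at hdesc
    have hmono : StrictMono τ := by
      cases r with
      | zero => exact fun a => a.elim0
      | succ r =>
        refine Fin.strictMono_iff_lt_succ.2 fun a => (hdesc _ _ rfl).lt_of_ne ?_
        exact τ.injective.ne Fin.castSucc_lt_succ.ne
    rwa [show τ = 1 from Equiv.ext (congrFun hmono.eq_id)]

end Equiv.Perm

open Equiv Perm

theorem manMu_eq_prod_inversions {s r : ℕ} (p : Matrix (Fin s) (Fin s) ℂ) (J : Fin r → Fin s)
    (σ : Perm (Fin r)) : manMu p J σ = ∏ st ∈ inversions σ, p (J (σ st.2)) (J (σ st.1)) :=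
  rfl

theorem manMu_one {s r : ℕ} (p : Matrix (Fin s) (Fin s) ℂ) (J : Fin r → Fin s) :
    manMu p J 1 = 1 := by
  rw [manMu_eq_prod_inversions, inversions_one, prod_empty]

theorem manMu_mul_swap {s r : ℕ} (p : Matrix (Fin s) (Fin s) ℂ) (J : Fin r → Fin s)
    {σ : Perm (Fin r)} {b c : Fin r} (hbc : (b : ℕ) + 1 = c) (hσ : σ b < σ c) :
    manMu p J (σ * swap b c) = p (J (σ b)) (J (σ c)) * manMu p J σ := by
  rw [manMu_eq_prod_inversions, manMu_eq_prod_inversions, inversions_mul_swap hbc hσ,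
    prod_insert (pair_notMem_map_inversions σ hbc), prod_map]
  simp

namespace List

theorem prod_ofFn_sum {R ι : Type*} [Semiring R] [Fintype ι] {r : ℕ} (f : Fin r → ι → R) :
    (ofFn fun a => ∑ j, f a j).prod = ∑ J : Fin r → ι, (ofFn fun a => f a (J a)).prod := by
  induction r with
  | zero => simp
  | succ r ih =>
    rw [ofFn_succ, prod_cons, ih fun a => f a.succ, sum_mul_sum,
      ← (Fin.consEquiv fun _ => ι).sum_comp, Fintype.sum_prod_type]
    simp [Fin.consEquiv]

theorem prod_ofFn_mul_of_commute {R : Type*} [Monoid R] {r : ℕ} (x y : Fin r → R)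
    (h : ∀ a b, Commute (y a) (x b)) :
    (ofFn fun a => x a * y a).prod = (ofFn x).prod * (ofFn y).prod := by
  induction r with
  | zero => simp
  | succ r ih =>
    have hy : Commute (y 0) (ofFn fun a => x a.succ).prod :=
      Commute.list_prod_right _ _ fun z hz => by
        obtain ⟨a, rfl⟩ := mem_ofFn.1 hz
        exact h 0 a.succ
    simp only [ofFn_succ, prod_cons, ih _ _ fun a b => h a.succ b.succ, mul_assoc,
      hy.left_comm]

theorem exists_prod_ofFn_eq_mul_adjacent {R : Type*} [Monoid R] {r : ℕ} (f : Fin r → R)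
    {b c : Fin r} (hbc : (b : ℕ) + 1 = c) :
    ∃ A B : R, ∀ g : Fin r → R, (∀ a, a ≠ b → a ≠ c → g a = f a) →
      (ofFn g).prod = A * (g b * g c) * B := by
  refine ⟨((ofFn f).take b).prod, ((ofFn f).drop (c + 1)).prod, fun g hg => ?_⟩
  have hg' : ∀ i (hi : i < r), i ≠ b → i ≠ c → g ⟨i, hi⟩ = f ⟨i, hi⟩ := fun i hi hb hc =>
    hg _ (fun h => hb (congrArg Fin.val h)) (fun h => hc (congrArg Fin.val h))
  have htake : (ofFn g).take b = (ofFn f).take b :=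
    ext_getElem (by simp) fun i h _ => by
      simp only [length_take, length_ofFn, lt_min_iff] at h
      simpa using hg' i h.2 (by omega) (by omega)
  have hdrop : (ofFn g).drop (c + 1) = (ofFn f).drop (c + 1) :=
    ext_getElem (by simp) fun i h _ => by
      simp only [length_drop, length_ofFn] at h
      simpa using hg' (c + 1 + i) (by omega) (by omega) (by omega)
  rw [← htake, ← hdrop, ← prod_take_mul_prod_drop (ofFn g) b,
    drop_eq_getElem_cons (by simp), prod_cons, hbc, drop_eq_getElem_cons (by simp), prod_cons]
  simp [mul_assoc]

end List

section Manin

variable {R : Type*} [Ring R] [Algebra ℂ R] {m s : ℕ} {q : Matrix (Fin m) (Fin m) ℂ}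
  {p : Matrix (Fin s) (Fin s) ℂ} {N : Matrix (Fin m) (Fin s) R}

theorem IsManin.exchange_rows_of_lt (hq : IsParametric q) (hp : IsParametric p)
    (hN : IsManin q p N) {i j : Fin m} (hij : i < j) {k l : Fin s} (hkl : k ≤ l) :
    N j k * N i l + p k l • (N j l * N i k)
      = q i j • (N i k * N j l + p k l • (N i l * N j k)) := by
  have hqq : q i j * q j i = 1 := hq.2.1 i j
  rcases hkl.lt_or_eq with hkl | rfl
  · linear_combination (norm := module) (-q i j) • hN.2 i j k l hij hkl
      - hqq • (p k l • (N j l * N i k) + N j k * N i l)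
  · rw [hp.2.2 k, one_smul, one_smul]
    linear_combination (norm := module) (-(2 * q i j)) • hN.1 i j k hij
      - hqq • (2 • (N j k * N i k))

theorem IsManin.exchange_rows (hq : IsParametric q) (hp : IsParametric p) (hN : IsManin q p N)
    (i j : Fin m) {k l : Fin s} (hkl : k ≤ l) :
    N j k * N i l + p k l • (N j l * N i k)
      = q i j • (N i k * N j l + p k l • (N i l * N j k)) := by
  rcases lt_trichotomy i j with hij | rfl | hji
  · exact hN.exchange_rows_of_lt hq hp hij hkl
  · rw [hq.2.2, one_smul]
  · rw [hN.exchange_rows_of_lt hq hp hji hkl, smul_smul, hq.2.1, one_smul]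

end Manin

section Permanent

variable {R : Type*} [Ring R] [Algebra ℂ R]

def rperTerm {n s r : ℕ} (p : Matrix (Fin s) (Fin s) ℂ) (M : Matrix (Fin n) (Fin s) R)
    (I : Fin r → Fin n) (J : Fin r → Fin s) (σ : Perm (Fin r)) : R :=
  manMu p J σ • (List.ofFn fun a => M (I a) (J (σ a))).prod

def rper {n s r : ℕ} (p : Matrix (Fin s) (Fin s) ℂ) (M : Matrix (Fin n) (Fin s) R)
    (I : Fin r → Fin n) (J : Fin r → Fin s) : R :=
  ∑ σ, rperTerm p M I J σ

theorem rnper_eq_inv_smul_rper {n s r : ℕ} (p : Matrix (Fin s) (Fin s) ℂ)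
    (M : Matrix (Fin n) (Fin s) R) (I : Fin r → Fin n) (J : Fin r → Fin s) :
    rnper p M I J = (vmult J : ℂ)⁻¹ • rper p M I J :=
  rfl

theorem rper_mul_of_commute {n m s r : ℕ} (p : Matrix (Fin s) (Fin s) ℂ)
    (M : Matrix (Fin n) (Fin m) R) (N : Matrix (Fin m) (Fin s) R)
    (hcomm : ∀ i j k l, Commute (M i j) (N k l)) (I : Fin r → Fin n) (K : Fin r → Fin s) :
    rper p (M * N) I K
      = ∑ J : Fin r → Fin m, (List.ofFn fun a => M (I a) (J a)).prod * rper p N J K := by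
  simp only [rper, rperTerm, Matrix.mul_apply, List.prod_ofFn_sum, smul_sum, mul_sum]
  rw [sum_comm]
  refine sum_congr rfl fun J _ => sum_congr rfl fun σ _ => ?_
  rw [List.prod_ofFn_mul_of_commute _ _ fun a b => (hcomm _ _ _ _).symm, mul_smul_comm]

variable {m s r : ℕ} {q : Matrix (Fin m) (Fin m) ℂ} {p : Matrix (Fin s) (Fin s) ℂ}
  {N : Matrix (Fin m) (Fin s) R} {K : Fin r → Fin s}

theorem rperTerm_comp_swap_pair_cancel (hq : IsParametric q) (hp : IsParametric p)
    (hN : IsManin q p N) (hK : Monotone K) (J : Fin r → Fin m) {b c : Fin r}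
    (hbc : (b : ℕ) + 1 = c) {σ : Perm (Fin r)} (hσ : σ b < σ c) :
    (rperTerm p N (J ∘ swap b c) K σ - q (J b) (J c) • rperTerm p N J K σ)
      + (rperTerm p N (J ∘ swap b c) K (σ * swap b c)
        - q (J b) (J c) • rperTerm p N J K (σ * swap b c)) = 0 := by
  obtain ⟨A, B, hAB⟩ := List.exists_prod_ofFn_eq_mul_adjacent (fun a => N (J a) (K (σ a))) hbc
  have hfix : ∀ a, a ≠ b → a ≠ c → swap b c a = a := fun a => swap_apply_of_ne_of_ne
  have h₁ := hAB (fun a => N (J (swap b c a)) (K (σ a))) fun a hb hc => by simp [hfix a hb hc]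
  have h₂ := hAB (fun a => N (J a) (K (σ a))) fun _ _ _ => rfl
  have h₃ := hAB (fun a => N (J (swap b c a)) (K (σ (swap b c a)))) fun a hb hc => by
    simp [hfix a hb hc]
  have h₄ := hAB (fun a => N (J a) (K (σ (swap b c a)))) fun a hb hc => by simp [hfix a hb hc]
  simp only [swap_apply_left, swap_apply_right] at h₁ h₃ h₄
  have key := congrArg (fun x => manMu p K σ • (A * x * B))
    (hN.exchange_rows hq hp (J b) (J c) (hK hσ.le))
  simp only [mul_add, add_mul, mul_smul_comm, smul_mul_assoc, smul_add] at key
  simp only [rperTerm, Function.comp_apply, Perm.mul_apply, manMu_mul_swap p K hbc hσ, h₁, h₂,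
    h₃, h₄]
  linear_combination (norm := module) key

theorem rper_comp_swap (hq : IsParametric q) (hp : IsParametric p) (hN : IsManin q p N)
    (hK : Monotone K) (J : Fin r → Fin m) {b c : Fin r} (hbc : (b : ℕ) + 1 = c) :
    rper p N (J ∘ swap b c) K = q (J b) (J c) • rper p N J K := by
  have hbc' : b ≠ c := Fin.ne_of_val_ne (by omega)
  -- the terms of `σ` and `σ * swap b c` cancel in pairs, by `IsManin.exchange_rows`
  rw [← sub_eq_zero, rper, rper, smul_sum, ← sum_sub_distrib]
  refine sum_ninvolution (· * swap b c) (fun σ => ?_)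
    (fun σ _ h => hbc' (swap_eq_one_iff.1 (mul_eq_left.1 h))) (fun _ => mem_univ _)
    (fun σ => by simp [mul_assoc])
  rcases lt_or_gt_of_ne (σ.injective.ne hbc') with hσ | hσ
  · exact rperTerm_comp_swap_pair_cancel hq hp hN hK J hbc hσ
  · have h := rperTerm_comp_swap_pair_cancel hq hp hN hK J hbc (σ := σ * swap b c)
      (by simpa using hσ)
    rwa [mul_swap_mul_self, add_comm] at h

theorem rper_comp_perm (hq : IsParametric q) (hp : IsParametric p) (hN : IsManin q p N)
    (hK : Monotone K) (J : Fin r → Fin m) (τ : Perm (Fin r)) :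
    rper p N (J ∘ τ) K = manMu q J τ • rper p N J K := by
  induction τ using induction_on_adjacent_swaps with
  | one => rw [manMu_one, one_smul, coe_one, Function.comp_id]
  | mul_swap τ b c hbc hτ ih =>
    rw [coe_mul, ← Function.comp_assoc, rper_comp_swap hq hp hN hK _ hbc, ih, smul_smul,
      manMu_mul_swap q J hbc hτ, Function.comp_apply, Function.comp_apply]

end Permanent

section SortedMultiIndex

variable {m r : ℕ}

theorem vmult_ne_zero (J : Fin r → Fin m) : vmult J ≠ 0 :=
  prod_ne_zero_iff.2 fun _ _ => Nat.factorial_ne_zero _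

theorem card_filter_comp_eq_self (J : Fin r → Fin m) :
    #{τ : Perm (Fin r) | J ∘ τ = J} = vmult J := by
  simpa [vmult, Fintype.card_subtype] using DomMulAct.stabilizer_card J

theorem card_filter_comp_eq_comp (J : Fin r → Fin m) (φ : Perm (Fin r)) :
    #{τ : Perm (Fin r) | J ∘ τ = J ∘ φ} = vmult J := by
  rw [← card_filter_comp_eq_self]
  refine card_nbij' (· * φ⁻¹) (· * φ) (fun τ hτ => ?_) (fun τ hτ => ?_)
    (fun τ _ => by simp [mul_assoc]) (fun τ _ => by simp [mul_assoc])
  · simp only [coe_filter, mem_univ, true_and, Set.mem_ofPred_eq] at hτ ⊢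
    funext a
    simpa using congrFun hτ (φ⁻¹ a)
  · simp only [coe_filter, mem_univ, true_and, Set.mem_ofPred_eq] at hτ ⊢
    funext a
    simpa using congrFun hτ (φ a)

theorem image_comp_perm_eq_filter_sort {J₀ : Fin r → Fin m} (hJ₀ : Monotone J₀) :
    univ.image (fun τ : Perm (Fin r) => J₀ ∘ τ) = univ.filter fun J => J ∘ Tuple.sort J = J₀ := by
  refine Finset.ext fun J => ?_
  simp only [mem_image, mem_filter, mem_univ, true_and]
  constructor
  · rintro ⟨τ, rfl⟩
    rw [Tuple.comp_perm_comp_sort_eq_comp_sort, Tuple.sort_eq_refl_iff_monotone.2 hJ₀]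
    rfl
  · rintro rfl
    exact ⟨(Tuple.sort J)⁻¹, by ext; simp⟩

theorem sum_comp_perm_eq_vmult_smul_sum {E : Type*} [AddCommMonoid E] {J₀ : Fin r → Fin m}
    (hJ₀ : Monotone J₀) (f : (Fin r → Fin m) → E) :
    ∑ τ : Perm (Fin r), f (J₀ ∘ τ) = vmult J₀ • ∑ J with J ∘ Tuple.sort J = J₀, f J := by
  rw [Finset.sum_comp, smul_sum, ← image_comp_perm_eq_filter_sort hJ₀]
  refine sum_congr rfl fun J hJ => ?_
  obtain ⟨φ, -, rfl⟩ := mem_image.1 hJ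
  rw [card_filter_comp_eq_comp]

theorem sum_eq_sum_monotone_inv_smul_sum_perm {𝕜 E : Type*} [DivisionSemiring 𝕜] [CharZero 𝕜]
    [AddCommMonoid E] [Module 𝕜 E] (f : (Fin r → Fin m) → E) :
    ∑ J, f J = ∑ J₀ : {J : Fin r → Fin m // Monotone J},
      (vmult J₀.1 : 𝕜)⁻¹ • ∑ τ : Perm (Fin r), f (J₀.1 ∘ τ) := by
  rw [← sum_fiberwise univ fun J =>
    (⟨J ∘ Tuple.sort J, Tuple.monotone_sort J⟩ : {J : Fin r → Fin m // Monotone J})]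
  refine sum_congr rfl fun J₀ _ => ?_
  rw [sum_comp_perm_eq_vmult_smul_sum J₀.2, ← Nat.cast_smul_eq_nsmul 𝕜, smul_smul,
    inv_mul_cancel₀ (Nat.cast_ne_zero.2 (vmult_ne_zero _)), one_smul]
  simp [Subtype.ext_iff]

end SortedMultiIndex

/-- Cauchy–Binet formula for normalized permanents: for `N` a `(q̂,p̂)`-Manin matrix whose
entries commute with those of `M`, any multi-index `I` and non-decreasing `K`,
`r̂per_{p̂}((MN)_{IK}) = ∑_J r̂per_{q̂}(M_{IJ}) r̂per_{p̂}(N_{JK})`, summed over all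
non-decreasing multi-indices `J` of length `r` in `{1,…,m}`. -/
theorem cauchy_binet_permanent {R : Type*} [Ring R] [Algebra ℂ R] {n m s r : ℕ}
    (q : Matrix (Fin m) (Fin m) ℂ) (p : Matrix (Fin s) (Fin s) ℂ)
    (hq : IsParametric q) (hp : IsParametric p)
    (M : Matrix (Fin n) (Fin m) R) (N : Matrix (Fin m) (Fin s) R)
    (hN : IsManin q p N)
    (hcomm : ∀ (i : Fin n) (j k : Fin m) (l : Fin s), Commute (M i j) (N k l))
    (I : Fin r → Fin n) (K : Fin r → Fin s) (hK : Monotone K) :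
    rnper p (M * N) I K
      = ∑ J : {J : Fin r → Fin m // Monotone J}, rnper q M I J.1 * rnper p N J.1 K := by
  have horbit : ∀ J₀ : Fin r → Fin m,
      ∑ τ : Perm (Fin r), (List.ofFn fun a => M (I a) ((J₀ ∘ τ) a)).prod * rper p N (J₀ ∘ τ) K
        = rper q M I J₀ * rper p N J₀ K := fun J₀ => by
    simp only [rper_comp_perm hq hp hN hK, mul_smul_comm, ← smul_mul_assoc, ← sum_mul]
    rfl
  rw [rnper_eq_inv_smul_rper, rper_mul_of_commute p M N hcomm,
    sum_eq_sum_monotone_inv_smul_sum_perm (𝕜 := ℂ), smul_sum]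
  refine sum_congr rfl fun J₀ _ => ?_
  rw [horbit, rnper_eq_inv_smul_rper, rnper_eq_inv_smul_rper, smul_mul_smul_comm, smul_smul,
    mul_comm]
end
end
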